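/- arXiv:2503.12529 — 8 statements merged into one kernel-verified Lean document; each statement's English description precedes it below -/
import Mathlib

section
/- Let w₁,…,w_N be scalar weights on an interval (x₀,x₁) with monic orthogonal polynomial sequences pⁱ, and let Qₙ and W be constructed from them as in the setup. Then for all natural numbers n ≠ m, ∫_{x₀}^{x₁} Qₙ(x) W(x) Qₘ(x)ᵀ dx = 0 (the N×N zero matrix); i.e., the matrix polynomials Qₙ are pairwise orthogonal with respect to the matrix weight W. -/
open MeasureTheory Matrix Polynomial

noncomputable section

/-- The staircase nilpotent matrix `A = ∑ a_{2j-1} E_{2j-1,2j} + ∑ a_{2j} E_{2j+1,2j}`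
(1-based indices, here realized with 0-based `Fin N` indices). -/
def nilA (N : ℕ) (a : ℕ → ℝ) : Matrix (Fin N) (Fin N) ℝ :=
  Matrix.of fun i k =>
    if k.val % 2 = 1 ∧ i.val + 1 = k.val then a k.val
    else if k.val % 2 = 1 ∧ i.val = k.val + 1 then a i.val
    else 0

/-- `Pₙ(x) = diag(pₙ¹(x), …, pₙᴺ(x))`. -/
def diagP {N : ℕ} (p : Fin N → ℕ → Polynomial ℝ) (n : ℕ) (x : ℝ) :
    Matrix (Fin N) (Fin N) ℝ :=
  Matrix.diagonal fun i => (p i n).eval x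

/-- `‖Pₙ‖² = diag(‖pₙ¹‖², …, ‖pₙᴺ‖²)` where `‖pₙⁱ‖² = ∫_S pₙⁱ(x)² wᵢ(x) dx`. -/
def nsq {N : ℕ} (S : Set ℝ) (w : Fin N → ℝ → ℝ) (p : Fin N → ℕ → Polynomial ℝ)
    (n : ℕ) : Matrix (Fin N) (Fin N) ℝ :=
  Matrix.diagonal fun i => ∫ x in S, (p i n).eval x ^ 2 * w i x

/-- The matrix polynomials
`Qₙ(x) = Pₙ(x) + A Pₙ₊₁(x) − ‖Pₙ‖² Aᵀ ‖Pₙ₋₁‖⁻² Pₙ₋₁(x) − Pₙ(x) A x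
        + ‖Pₙ‖² Aᵀ ‖Pₙ₋₁‖⁻² Pₙ₋₁(x) A x`,
with the terms containing `‖P₋₁‖⁻²` set to `0` when `n = 0`. -/
def matQ {N : ℕ} (S : Set ℝ) (w : Fin N → ℝ → ℝ) (p : Fin N → ℕ → Polynomial ℝ)
    (a : ℕ → ℝ) (n : ℕ) (x : ℝ) : Matrix (Fin N) (Fin N) ℝ :=
  let A := nilA N a
  let C : Matrix (Fin N) (Fin N) ℝ :=
    if n = 0 then 0 else nsq S w p n * Aᵀ * (nsq S w p (n - 1))⁻¹
  diagP p n x + A * diagP p (n + 1) x - C * diagP p (n - 1) x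
    - x • (diagP p n x * A) + x • (C * diagP p (n - 1) x * A)

/-- `W(x) = T(x) diag(w₁(x), …, w_N(x)) T(x)ᵀ` with `T(x) = I + Ax`. -/
def matW {N : ℕ} (w : Fin N → ℝ → ℝ) (a : ℕ → ℝ) (x : ℝ) :
    Matrix (Fin N) (Fin N) ℝ :=
  (1 + x • nilA N a) * Matrix.diagonal (fun i => w i x) * (1 + x • nilA N a)ᵀ

/-! ### Auxiliary lemmas -/

lemma nilA_ne_zero {N : ℕ} {a : ℕ → ℝ} {i k : Fin N} (h : nilA N a i k ≠ 0) :
    k.val % 2 = 1 ∧ i.val % 2 = 0 := by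
  unfold nilA at h
  simp only [Matrix.of_apply] at h
  split_ifs at h with h1 h2
  · exact ⟨h1.1, by omega⟩
  · exact ⟨h2.1, by omega⟩
  · exact absurd rfl h

lemma nilA_mul_between {N : ℕ} {a : ℕ → ℝ} (i k l : Fin N) (c : ℝ) :
    nilA N a i k * c * nilA N a k l = 0 := by
  by_cases h1 : nilA N a i k = 0
  · simp [h1]
  by_cases h2 : nilA N a k l = 0
  · simp [h2]
  have := (nilA_ne_zero h1).1
  have := (nilA_ne_zero h2).2
  omega

lemma nilA_mul_diag_mul_nilA {N : ℕ} (a : ℕ → ℝ) (d : Fin N → ℝ) :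
    nilA N a * Matrix.diagonal d * nilA N a = 0 := by
  ext i l
  rw [Matrix.mul_apply, Matrix.zero_apply]
  apply Finset.sum_eq_zero
  intro k _
  rw [Matrix.mul_diagonal]
  exact nilA_mul_between i k l (d k)

lemma nilA_mul_nilA {N : ℕ} (a : ℕ → ℝ) : nilA N a * nilA N a = 0 := by
  ext i l
  rw [Matrix.mul_apply, Matrix.zero_apply]
  apply Finset.sum_eq_zero
  intro k _
  have := nilA_mul_between (a := a) i k l 1
  simpa using this

lemma integrable_poly_mul (w : ℝ → ℝ) (hm : Measurable w)
    (hnn : ∀ᵐ x ∂(volume : Measure ℝ), 0 ≤ w x)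
    (hmom : ∀ n : ℕ, Integrable (fun x => |x| ^ n * w x))
    (q : Polynomial ℝ) : Integrable (fun x => q.eval x * w x) := by
  have key : ∀ n : ℕ, ∀ c : ℝ, Integrable (fun x => c * x ^ n * w x) := by
    intro n c
    apply Integrable.mono' (((hmom n).const_mul |c|))
    · exact ((continuous_pow n).measurable.const_mul c).aestronglyMeasurable.mul
        hm.aestronglyMeasurable
    · filter_upwards [hnn] with x hx
      rw [Real.norm_eq_abs, abs_mul, abs_mul, abs_of_nonneg hx, abs_pow, mul_assoc]
  have : (fun x => q.eval x * w x)
      = fun x => ∑ n ∈ Finset.range (q.natDegree + 1), q.coeff n * x ^ n * w x := by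
    funext x
    rw [Polynomial.eval_eq_sum_range, Finset.sum_mul]
  rw [this]
  exact integrable_finset_sum _ fun n _ => key n (q.coeff n)

lemma nine_abstract (L : Polynomial ℝ → ℝ)
    (Ladd : ∀ q r : Polynomial ℝ, L (q + r) = L q + L r)
    (Lsmul : ∀ (c : ℝ) (q : Polynomial ℝ), L (c • q) = c * L q)
    (c1 c2 c3 d1 d2 d3 : ℝ) (u1 u2 u3 v1 v2 v3 : Polynomial ℝ) :
    L ((c1 • u1 + c2 • u2 + c3 • u3) * (d1 • v1 + d2 • v2 + d3 • v3))
    = c1 * d1 * L (u1 * v1) + c1 * d2 * L (u1 * v2) + c1 * d3 * L (u1 * v3)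
    + c2 * d1 * L (u2 * v1) + c2 * d2 * L (u2 * v2) + c2 * d3 * L (u2 * v3)
    + c3 * d1 * L (u3 * v1) + c3 * d2 * L (u3 * v2) + c3 * d3 * L (u3 * v3) := by
  have hpoly : (c1 • u1 + c2 • u2 + c3 • u3) * (d1 • v1 + d2 • v2 + d3 • v3)
      = (c1 * d1) • (u1 * v1) + ((c1 * d2) • (u1 * v2) + ((c1 * d3) • (u1 * v3)
      + ((c2 * d1) • (u2 * v1) + ((c2 * d2) • (u2 * v2) + ((c2 * d3) • (u2 * v3)
      + ((c3 * d1) • (u3 * v1) + ((c3 * d2) • (u3 * v2) + (c3 * d3) • (u3 * v3)))))))) := by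
    simp only [Polynomial.smul_eq_C_mul, Polynomial.C_mul]
    ring
  rw [hpoly, Ladd, Ladd, Ladd, Ladd, Ladd, Ladd, Ladd, Ladd,
    Lsmul, Lsmul, Lsmul, Lsmul, Lsmul, Lsmul, Lsmul, Lsmul, Lsmul]
  ring

lemma integral_nine (w : ℝ → ℝ) (S : Set ℝ)
    (hint : ∀ q : Polynomial ℝ, Integrable (fun x => q.eval x * w x) (volume.restrict S))
    (c1 c2 c3 d1 d2 d3 : ℝ) (u1 u2 u3 v1 v2 v3 : Polynomial ℝ) :
    ∫ x in S, (c1 * eval x u1 + c2 * eval x u2 + c3 * eval x u3) *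
        (d1 * eval x v1 + d2 * eval x v2 + d3 * eval x v3) * w x
    = c1 * d1 * (∫ x in S, eval x u1 * eval x v1 * w x)
    + c1 * d2 * (∫ x in S, eval x u1 * eval x v2 * w x)
    + c1 * d3 * (∫ x in S, eval x u1 * eval x v3 * w x)
    + c2 * d1 * (∫ x in S, eval x u2 * eval x v1 * w x)
    + c2 * d2 * (∫ x in S, eval x u2 * eval x v2 * w x)
    + c2 * d3 * (∫ x in S, eval x u2 * eval x v3 * w x)
    + c3 * d1 * (∫ x in S, eval x u3 * eval x v1 * w x)
    + c3 * d2 * (∫ x in S, eval x u3 * eval x v2 * w x)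
    + c3 * d3 * (∫ x in S, eval x u3 * eval x v3 * w x) := by
  have Ladd : ∀ q r : Polynomial ℝ,
      (∫ x in S, (q + r).eval x * w x) = (∫ x in S, q.eval x * w x) + ∫ x in S, r.eval x * w x := by
    intro q r
    simp only [eval_add, add_mul]
    exact integral_add (hint q) (hint r)
  have Lsmul : ∀ (c : ℝ) (q : Polynomial ℝ),
      (∫ x in S, (c • q).eval x * w x) = c * ∫ x in S, q.eval x * w x := by
    intro c q
    have : ∀ x : ℝ, (c • q).eval x * w x = c * (q.eval x * w x) := by
      intro x
      rw [Polynomial.smul_eq_C_mul, eval_mul, eval_C, mul_assoc]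
    simp only [this]
    exact integral_const_mul c _
  have h9 := nine_abstract (fun q => ∫ x in S, q.eval x * w x) Ladd Lsmul
      c1 c2 c3 d1 d2 d3 u1 u2 u3 v1 v2 v3
  have hLHS : (fun x => (c1 * eval x u1 + c2 * eval x u2 + c3 * eval x u3) *
        (d1 * eval x v1 + d2 * eval x v2 + d3 * eval x v3) * w x)
      = fun x => ((c1 • u1 + c2 • u2 + c3 • u3) * (d1 • v1 + d2 • v2 + d3 • v3)).eval x * w x := by
    funext x
    rw [eval_mul]
    simp only [eval_add, Polynomial.smul_eq_C_mul, eval_mul, eval_C]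
  have hUV : ∀ u v : Polynomial ℝ,
      (fun x => (u * v).eval x * w x) = fun x => eval x u * eval x v * w x := by
    intro u v; funext x; rw [eval_mul]
  simp only [hUV] at h9
  rw [hLHS]
  simp only [eval_mul] at h9 ⊢
  exact h9

lemma integrable_nine (w : ℝ → ℝ) (S : Set ℝ)
    (hint : ∀ q : Polynomial ℝ, Integrable (fun x => q.eval x * w x) (volume.restrict S))
    (c1 c2 c3 d1 d2 d3 : ℝ) (u1 u2 u3 v1 v2 v3 : Polynomial ℝ) :
    Integrable (fun x => (c1 * eval x u1 + c2 * eval x u2 + c3 * eval x u3) *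
        (d1 * eval x v1 + d2 * eval x v2 + d3 * eval x v3) * w x) (volume.restrict S) := by
  have hLHS : (fun x => (c1 * eval x u1 + c2 * eval x u2 + c3 * eval x u3) *
        (d1 * eval x v1 + d2 * eval x v2 + d3 * eval x v3) * w x)
      = fun x => ((c1 • u1 + c2 • u2 + c3 • u3) * (d1 • v1 + d2 • v2 + d3 • v3)).eval x * w x := by
    funext x
    rw [eval_mul]
    simp only [eval_add, Polynomial.smul_eq_C_mul, eval_mul, eval_C]
  rw [hLHS]
  exact hint _

/-- `C`-matrix of the construction. -/
def Cmat {N : ℕ} (S : Set ℝ) (w : Fin N → ℝ → ℝ) (p : Fin N → ℕ → Polynomial ℝ)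
    (a : ℕ → ℝ) (n : ℕ) : Matrix (Fin N) (Fin N) ℝ :=
  if n = 0 then 0 else nsq S w p n * (nilA N a)ᵀ * (nsq S w p (n - 1))⁻¹

def matR {N : ℕ} (S : Set ℝ) (w : Fin N → ℝ → ℝ) (p : Fin N → ℕ → Polynomial ℝ)
    (a : ℕ → ℝ) (n : ℕ) (x : ℝ) : Matrix (Fin N) (Fin N) ℝ :=
  diagP p n x + nilA N a * diagP p (n + 1) x - Cmat S w p a n * diagP p (n - 1) x

lemma matQ_eq {N : ℕ} (S : Set ℝ) (w : Fin N → ℝ → ℝ) (p : Fin N → ℕ → Polynomial ℝ)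
    (a : ℕ → ℝ) (n : ℕ) (x : ℝ) :
    matQ S w p a n x = matR S w p a n x * (1 - x • nilA N a) := by
  unfold matQ matR Cmat
  have hz : nilA N a * diagP p (n+1) x * nilA N a = 0 := nilA_mul_diag_mul_nilA a _
  rw [Matrix.mul_sub, Matrix.mul_one, Matrix.mul_smul]
  rw [Matrix.sub_mul, Matrix.add_mul, hz]
  simp only [smul_add, smul_sub, smul_zero]
  abel

lemma one_sub_mul_one_add {N : ℕ} (a : ℕ → ℝ) (x : ℝ) :
    (1 - x • nilA N a) * (1 + x • nilA N a) = 1 := by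
  have hBB : (x • nilA N a) * (x • nilA N a) = (0 : Matrix (Fin N) (Fin N) ℝ) := by
    rw [Matrix.smul_mul, Matrix.mul_smul, nilA_mul_nilA]
    simp
  rw [Matrix.sub_mul, Matrix.mul_add, Matrix.mul_add, Matrix.one_mul, Matrix.mul_one, hBB]
  simp only [Matrix.one_mul]
  abel

lemma QWQ {N : ℕ} (S : Set ℝ) (w : Fin N → ℝ → ℝ) (p : Fin N → ℕ → Polynomial ℝ)
    (a : ℕ → ℝ) (n m : ℕ) (x : ℝ) :
    matQ S w p a n x * matW w a x * (matQ S w p a m x)ᵀ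
    = matR S w p a n x * Matrix.diagonal (fun i => w i x) * (matR S w p a m x)ᵀ := by
  rw [matQ_eq, matQ_eq, matW, Matrix.transpose_mul]
  have h1 : (1 - x • nilA N a) * (1 + x • nilA N a) = 1 := one_sub_mul_one_add a x
  have h2 : (1 + x • nilA N a)ᵀ * (1 - x • nilA N a)ᵀ = 1 := by
    rw [← Matrix.transpose_mul, h1, Matrix.transpose_one]
  calc matR S w p a n x * (1 - x • nilA N a) *
        ((1 + x • nilA N a) * Matrix.diagonal (fun i => w i x) * (1 + x • nilA N a)ᵀ) *
        ((1 - x • nilA N a)ᵀ * (matR S w p a m x)ᵀ)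
      = matR S w p a n x * ((1 - x • nilA N a) * (1 + x • nilA N a)) *
        Matrix.diagonal (fun i => w i x) *
        ((1 + x • nilA N a)ᵀ * (1 - x • nilA N a)ᵀ) * (matR S w p a m x)ᵀ := by
        simp only [Matrix.mul_assoc]
    _ = matR S w p a n x * Matrix.diagonal (fun i => w i x) * (matR S w p a m x)ᵀ := by
        rw [h1, h2, Matrix.mul_one]
        simp [Matrix.mul_assoc]

lemma nsq_inv {N : ℕ} (S : Set ℝ) (w : Fin N → ℝ → ℝ) (p : Fin N → ℕ → Polynomial ℝ)
    (hnorm : ∀ (k : Fin N) (r : ℕ), (0:ℝ) < ∫ x in S, (p k r).eval x ^ 2 * w k x) (r : ℕ) :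
    (nsq S w p r)⁻¹
      = Matrix.diagonal (fun k => (∫ x in S, (p k r).eval x ^ 2 * w k x)⁻¹) := by
  apply inv_eq_right_inv
  rw [nsq, Matrix.diagonal_mul_diagonal]
  have : (fun k => (∫ x in S, (p k r).eval x ^ 2 * w k x) *
      (∫ x in S, (p k r).eval x ^ 2 * w k x)⁻¹) = fun _ => (1:ℝ) := by
    funext k
    exact mul_inv_cancel₀ (ne_of_gt (hnorm k r))
  rw [this, Matrix.diagonal_one]

lemma Cmat_apply {N : ℕ} (S : Set ℝ) (w : Fin N → ℝ → ℝ) (p : Fin N → ℕ → Polynomial ℝ)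
    (a : ℕ → ℝ)
    (hnorm : ∀ (k : Fin N) (r : ℕ), (0:ℝ) < ∫ x in S, (p k r).eval x ^ 2 * w k x)
    {n : ℕ} (hn : n ≠ 0) (i k : Fin N) :
    Cmat S w p a n i k = (∫ x in S, (p i n).eval x ^ 2 * w i x) * nilA N a k i *
      (∫ x in S, (p k (n-1)).eval x ^ 2 * w k x)⁻¹ := by
  rw [Cmat, if_neg hn, nsq_inv S w p hnorm, nsq]
  rw [Matrix.mul_apply]
  rw [Finset.sum_eq_single k]
  · rw [Matrix.diagonal_mul, Matrix.transpose_apply, Matrix.diagonal_apply_eq, mul_assoc]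
  · intro b _ hb
    rw [Matrix.diagonal_apply_ne _ hb, mul_zero]
  · intro h
    exact absurd (Finset.mem_univ k) h

lemma Cmat_zero {N : ℕ} (S : Set ℝ) (w : Fin N → ℝ → ℝ) (p : Fin N → ℕ → Polynomial ℝ)
    (a : ℕ → ℝ) (i k : Fin N) : Cmat S w p a 0 i k = 0 := by
  rw [Cmat, if_pos rfl, Matrix.zero_apply]

lemma matR_apply {N : ℕ} (S : Set ℝ) (w : Fin N → ℝ → ℝ) (p : Fin N → ℕ → Polynomial ℝ)
    (a : ℕ → ℝ) (n : ℕ) (x : ℝ) (i k : Fin N) :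
    matR S w p a n x i k = (if i = k then (1:ℝ) else 0) * eval x (p k n)
      + nilA N a i k * eval x (p k (n+1))
      + (-(Cmat S w p a n i k)) * eval x (p k (n-1)) := by
  rw [matR]
  simp only [Matrix.sub_apply, Matrix.add_apply, diagP, Matrix.mul_apply]
  rw [Finset.sum_eq_single k (fun b _ hb => by rw [Matrix.diagonal_apply_ne _ hb, mul_zero])
      (fun h => absurd (Finset.mem_univ k) h),
    Finset.sum_eq_single k (fun b _ hb => by rw [Matrix.diagonal_apply_ne _ hb, mul_zero])
      (fun h => absurd (Finset.mem_univ k) h)]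
  rw [Matrix.diagonal_apply_eq, Matrix.diagonal_apply_eq]
  by_cases h : i = k
  · subst h; simp [Matrix.diagonal_apply_eq]; ring
  · rw [Matrix.diagonal_apply_ne _ h]
    simp [h]
    ring

def Eint {N : ℕ} (S : Set ℝ) (w : Fin N → ℝ → ℝ) (p : Fin N → ℕ → Polynomial ℝ)
    (r s : ℕ) (k : Fin N) : ℝ :=
  ∫ x in S, eval x (p k r) * eval x (p k s) * w k x

/-- The matrix polynomials `Qₙ` are pairwise orthogonal with respect to the matrix
weight `W`: for `n ≠ m`, `∫_{x₀}^{x₁} Qₙ(x) W(x) Qₘ(x)ᵀ dx = 0`. -/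
theorem matQ_pairwise_orthogonal
    (N : ℕ) (x₀ x₁ : ℝ) (w : Fin N → ℝ → ℝ) (p : Fin N → ℕ → Polynomial ℝ)
    (a : ℕ → ℝ)
    (hmeas : ∀ i, Measurable (w i))
    (hpos : ∀ i, ∀ᵐ x ∂volume, x ∈ Set.Ioo x₀ x₁ → 0 < w i x)
    (hsupp : ∀ i, ∀ x ∉ Set.Ioo x₀ x₁, w i x = 0)
    (hmom : ∀ i (n : ℕ), Integrable (fun x => |x| ^ n * w i x))
    (hmonic : ∀ i n, (p i n).Monic)
    (hdeg : ∀ i n, (p i n).natDegree = n)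
    (horth : ∀ i, ∀ n m : ℕ, n ≠ m →
      ∫ x in Set.Ioo x₀ x₁, (p i n).eval x * (p i m).eval x * w i x = 0)
    (hnorm : ∀ i n, 0 < ∫ x in Set.Ioo x₀ x₁, (p i n).eval x ^ 2 * w i x)
    (ha : ∀ k, 1 ≤ k → k ≤ N - 1 → a k ≠ 0) :
    ∀ n m : ℕ, n ≠ m → ∀ i j : Fin N,
      ∫ x in Set.Ioo x₀ x₁,
        (matQ (Set.Ioo x₀ x₁) w p a n x * matW w a x *
          (matQ (Set.Ioo x₀ x₁) w p a m x)ᵀ) i j = 0 := by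
  intro n m hnm i j
  set S := Set.Ioo x₀ x₁ with hS
  -- basic facts
  have hnn : ∀ k : Fin N, ∀ᵐ x ∂(volume : Measure ℝ), 0 ≤ w k x := by
    intro k
    filter_upwards [hpos k] with x hx
    by_cases h : x ∈ Set.Ioo x₀ x₁
    · exact le_of_lt (hx h)
    · rw [hsupp k x h]
  have hint : ∀ (k : Fin N) (q : Polynomial ℝ),
      Integrable (fun x => q.eval x * w k x) (volume.restrict S) :=
    fun k q => (integrable_poly_mul (w k) (hmeas k) (hnn k) (hmom k) q).restrict
  have hnorm' : ∀ (k : Fin N) (r : ℕ), (0:ℝ) < ∫ x in S, (p k r).eval x ^ 2 * w k x :=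
    fun k r => hnorm k r
  have hE0 : ∀ (r s : ℕ) (k : Fin N), r ≠ s → Eint S w p r s k = 0 :=
    fun r s k h => horth k r s h
  have hEsq : ∀ (r : ℕ) (k : Fin N),
      Eint S w p r r k = ∫ x in S, (p k r).eval x ^ 2 * w k x := by
    intro r k
    simp only [Eint]
    exact integral_congr_ae (Filter.Eventually.of_forall fun x => by ring)
  -- coefficients
  set c1 : Fin N → ℝ := fun k => if i = k then 1 else 0 with hc1
  set c2 : Fin N → ℝ := fun k => nilA N a i k with hc2
  set c3 : Fin N → ℝ := fun k => -(Cmat S w p a n i k) with hc3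
  set d1 : Fin N → ℝ := fun k => if j = k then 1 else 0 with hd1
  set d2 : Fin N → ℝ := fun k => nilA N a j k with hd2
  set d3 : Fin N → ℝ := fun k => -(Cmat S w p a m j k) with hd3
  have key : ∀ x : ℝ,
      (matQ S w p a n x * matW w a x * (matQ S w p a m x)ᵀ) i j
      = ∑ k : Fin N,
          (c1 k * eval x (p k n) + c2 k * eval x (p k (n+1)) + c3 k * eval x (p k (n-1))) *
          (d1 k * eval x (p k m) + d2 k * eval x (p k (m+1)) + d3 k * eval x (p k (m-1))) *
          w k x := by
    intro x
    rw [QWQ, Matrix.mul_apply]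
    apply Finset.sum_congr rfl
    intro k _
    rw [Matrix.mul_diagonal, Matrix.transpose_apply, matR_apply, matR_apply, hc1, hc2, hc3,
      hd1, hd2, hd3]
    ring
  simp only [key]
  rw [integral_finset_sum _ (fun k _ => integrable_nine (w k) S (hint k)
    (c1 k) (c2 k) (c3 k) (d1 k) (d2 k) (d3 k) _ _ _ _ _ _)]
  have hcombo : ∀ k : Fin N,
      (∫ x in S,
        (c1 k * eval x (p k n) + c2 k * eval x (p k (n+1)) + c3 k * eval x (p k (n-1))) *
        (d1 k * eval x (p k m) + d2 k * eval x (p k (m+1)) + d3 k * eval x (p k (m-1))) *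
        w k x)
      = c1 k * d1 k * Eint S w p n m k
      + c1 k * d2 k * Eint S w p n (m+1) k
      + c1 k * d3 k * Eint S w p n (m-1) k
      + c2 k * d1 k * Eint S w p (n+1) m k
      + c2 k * d2 k * Eint S w p (n+1) (m+1) k
      + c2 k * d3 k * Eint S w p (n+1) (m-1) k
      + c3 k * d1 k * Eint S w p (n-1) m k
      + c3 k * d2 k * Eint S w p (n-1) (m+1) k
      + c3 k * d3 k * Eint S w p (n-1) (m-1) k := by
    intro k
    simp only [Eint]
    exact integral_nine (w k) S (hint k) _ _ _ _ _ _ _ _ _ _ _ _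
  simp only [hcombo]
  -- now pure algebra
  by_cases hab : m = n + 1
  · -- dead terms
    have z1 : ∀ k : Fin N, Eint S w p n m k = 0 := fun k => hE0 _ _ k hnm
    have z2 : ∀ k : Fin N, Eint S w p n (m+1) k = 0 := fun k => hE0 _ _ k (by omega)
    have z5 : ∀ k : Fin N, Eint S w p (n+1) (m+1) k = 0 := fun k => hE0 _ _ k (by omega)
    have z6 : ∀ k : Fin N, Eint S w p (n+1) (m-1) k = 0 := fun k => hE0 _ _ k (by omega)
    have z7 : ∀ k : Fin N, Eint S w p (n-1) m k = 0 := fun k => hE0 _ _ k (by omega)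
    have z8 : ∀ k : Fin N, Eint S w p (n-1) (m+1) k = 0 := fun k => hE0 _ _ k (by omega)
    simp only [z1, z2, z5, z6, z7, z8, mul_zero, add_zero, zero_add]
    -- handle the (n-1, m-1) term
    have hT9 : ∀ k : Fin N, c3 k * d3 k * Eint S w p (n-1) (m-1) k = 0 := by
      intro k
      by_cases hn0 : n = 0
      · have : c3 k = 0 := by rw [hc3]; simp only [hn0, Cmat_zero, neg_zero]
        rw [this, zero_mul, zero_mul]
      · rw [hE0 (n-1) (m-1) k (by omega), mul_zero]
    simp only [hT9, add_zero]
    have e1 : m - 1 = n := by omega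
    have e2 : n + 1 = m := by omega
    simp only [e1, e2]
    rw [Finset.sum_add_distrib]
    have s1 : (∑ k : Fin N, c1 k * d3 k * Eint S w p n n k)
        = d3 i * Eint S w p n n i := by
      simp only [hc1, ite_mul, one_mul, zero_mul, Finset.sum_ite_eq, Finset.mem_univ,
        if_true]
    have s2 : (∑ k : Fin N, c2 k * d1 k * Eint S w p m m k)
        = c2 j * Eint S w p m m j := by
      simp only [hd1, mul_ite, mul_one, mul_zero, ite_mul, zero_mul, Finset.sum_ite_eq,
        Finset.mem_univ, if_true]
    rw [s1, s2, hd3, hc2]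
    simp only
    rw [Cmat_apply S w p a hnorm' (by omega : m ≠ 0) j i]
    simp only [e1]
    rw [hEsq n i, hEsq m j]
    have hne : (∫ x in S, (p i n).eval x ^ 2 * w i x) ≠ 0 := ne_of_gt (hnorm' i n)
    field_simp
    ring
  · by_cases hba : n = m + 1
    · have z1 : ∀ k : Fin N, Eint S w p n m k = 0 := fun k => hE0 _ _ k hnm
      have z3 : ∀ k : Fin N, Eint S w p n (m-1) k = 0 := fun k => hE0 _ _ k (by omega)
      have z4 : ∀ k : Fin N, Eint S w p (n+1) m k = 0 := fun k => hE0 _ _ k (by omega)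
      have z5 : ∀ k : Fin N, Eint S w p (n+1) (m+1) k = 0 := fun k => hE0 _ _ k (by omega)
      have z6 : ∀ k : Fin N, Eint S w p (n+1) (m-1) k = 0 := fun k => hE0 _ _ k (by omega)
      have z8 : ∀ k : Fin N, Eint S w p (n-1) (m+1) k = 0 := fun k => hE0 _ _ k (by omega)
      simp only [z1, z3, z4, z5, z6, z8, mul_zero, add_zero, zero_add]
      have hT9 : ∀ k : Fin N, c3 k * d3 k * Eint S w p (n-1) (m-1) k = 0 := by
        intro k
        by_cases hm0 : m = 0
        · have : d3 k = 0 := by rw [hd3]; simp only [hm0, Cmat_zero, neg_zero]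
          rw [this, mul_zero, zero_mul]
        · rw [hE0 (n-1) (m-1) k (by omega), mul_zero]
      simp only [hT9, add_zero]
      have e1 : m + 1 = n := by omega
      have e2 : n - 1 = m := by omega
      simp only [e1, e2]
      rw [Finset.sum_add_distrib]
      have s1 : (∑ k : Fin N, c1 k * d2 k * Eint S w p n n k)
          = d2 i * Eint S w p n n i := by
        simp only [hc1, ite_mul, one_mul, zero_mul, Finset.sum_ite_eq, Finset.mem_univ,
          if_true]
      have s2 : (∑ k : Fin N, c3 k * d1 k * Eint S w p m m k)
          = c3 j * Eint S w p m m j := by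
        simp only [hd1, mul_ite, mul_one, mul_zero, ite_mul, zero_mul, Finset.sum_ite_eq,
          Finset.mem_univ, if_true]
      rw [s1, s2, hd2, hc3]
      simp only
      rw [Cmat_apply S w p a hnorm' (by omega : n ≠ 0) i j]
      simp only [e2]
      rw [hEsq n i, hEsq m j]
      have hne : (∫ x in S, (p j m).eval x ^ 2 * w j x) ≠ 0 := ne_of_gt (hnorm' j m)
      field_simp
      ring
    · by_cases hc : m = n + 2
      · have z1 : ∀ k : Fin N, Eint S w p n m k = 0 := fun k => hE0 _ _ k hnm
        have z2 : ∀ k : Fin N, Eint S w p n (m+1) k = 0 := fun k => hE0 _ _ k (by omega)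
        have z3 : ∀ k : Fin N, Eint S w p n (m-1) k = 0 := fun k => hE0 _ _ k (by omega)
        have z4 : ∀ k : Fin N, Eint S w p (n+1) m k = 0 := fun k => hE0 _ _ k (by omega)
        have z5 : ∀ k : Fin N, Eint S w p (n+1) (m+1) k = 0 := fun k => hE0 _ _ k (by omega)
        have z7 : ∀ k : Fin N, Eint S w p (n-1) m k = 0 := fun k => hE0 _ _ k (by omega)
        have z8 : ∀ k : Fin N, Eint S w p (n-1) (m+1) k = 0 := fun k => hE0 _ _ k (by omega)
        have z9 : ∀ k : Fin N, Eint S w p (n-1) (m-1) k = 0 := fun k => hE0 _ _ k (by omega)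
        simp only [z1, z2, z3, z4, z5, z7, z8, z9, mul_zero, add_zero, zero_add]
        apply Finset.sum_eq_zero
        intro k _
        rw [hc2, hd3]
        simp only
        rw [Cmat_apply S w p a hnorm' (by omega : m ≠ 0) j k]
        have hz := nilA_mul_between (a := a) i k j
          ((∫ x in S, (p j m).eval x ^ 2 * w j x) *
            (∫ x in S, (p k (m-1)).eval x ^ 2 * w k x)⁻¹ * Eint S w p (n+1) (m-1) k)
        linear_combination -hz
      · by_cases hd : n = m + 2
        · have z1 : ∀ k : Fin N, Eint S w p n m k = 0 := fun k => hE0 _ _ k hnm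
          have z2 : ∀ k : Fin N, Eint S w p n (m+1) k = 0 := fun k => hE0 _ _ k (by omega)
          have z3 : ∀ k : Fin N, Eint S w p n (m-1) k = 0 := fun k => hE0 _ _ k (by omega)
          have z4 : ∀ k : Fin N, Eint S w p (n+1) m k = 0 := fun k => hE0 _ _ k (by omega)
          have z5 : ∀ k : Fin N, Eint S w p (n+1) (m+1) k = 0 := fun k => hE0 _ _ k (by omega)
          have z6 : ∀ k : Fin N, Eint S w p (n+1) (m-1) k = 0 := fun k => hE0 _ _ k (by omega)
          have z7 : ∀ k : Fin N, Eint S w p (n-1) m k = 0 := fun k => hE0 _ _ k (by omega)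
          have z9 : ∀ k : Fin N, Eint S w p (n-1) (m-1) k = 0 := fun k => hE0 _ _ k (by omega)
          simp only [z1, z2, z3, z4, z5, z6, z7, z9, mul_zero, add_zero, zero_add]
          apply Finset.sum_eq_zero
          intro k _
          rw [hc3, hd2]
          simp only
          rw [Cmat_apply S w p a hnorm' (by omega : n ≠ 0) i k]
          have hz := nilA_mul_between (a := a) j k i
            ((∫ x in S, (p i n).eval x ^ 2 * w i x) *
              (∫ x in S, (p k (n-1)).eval x ^ 2 * w k x)⁻¹ * Eint S w p (n-1) (m+1) k)
          linear_combination -hz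
        · -- generic case: all nine integrals vanish
          have z1 : ∀ k : Fin N, Eint S w p n m k = 0 := fun k => hE0 _ _ k hnm
          have z2 : ∀ k : Fin N, Eint S w p n (m+1) k = 0 := fun k => hE0 _ _ k (by omega)
          have z3 : ∀ k : Fin N, Eint S w p n (m-1) k = 0 := fun k => hE0 _ _ k (by omega)
          have z4 : ∀ k : Fin N, Eint S w p (n+1) m k = 0 := fun k => hE0 _ _ k (by omega)
          have z5 : ∀ k : Fin N, Eint S w p (n+1) (m+1) k = 0 := fun k => hE0 _ _ k (by omega)
          have z6 : ∀ k : Fin N, Eint S w p (n+1) (m-1) k = 0 := fun k => hE0 _ _ k (by omega)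
          have z7 : ∀ k : Fin N, Eint S w p (n-1) m k = 0 := fun k => hE0 _ _ k (by omega)
          have z8 : ∀ k : Fin N, Eint S w p (n-1) (m+1) k = 0 := fun k => hE0 _ _ k (by omega)
          have z9 : ∀ k : Fin N, Eint S w p (n-1) (m-1) k = 0 := fun k => hE0 _ _ k (by omega)
          simp only [z1, z2, z3, z4, z5, z6, z7, z8, z9, mul_zero, add_zero, zero_add,
            Finset.sum_const_zero]

end
end

section
/- Let w₁,…,w_N be scalar weights on (x₀,x₁) with monic orthogonal polynomial sequences pⁱ, and let Qₙ be constructed from them as in the setup. Then for every n ≥ 0, every entry of Qₙ is a polynomial of degree at most n, and the N×N matrix Kₙ whose (i,j) entry is the coefficient of xⁿ in the (i,j) entry of Qₙ is invertible. In particular Qₙ is a matrix polynomial of degree n with nonsingular leading coefficient. -/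
open MeasureTheory Matrix Polynomial

noncomputable section

/-- The matrix polynomial
`Qₙ = Pₙ + A Pₙ₊₁ − ‖Pₙ‖² Aᵀ ‖Pₙ₋₁‖⁻² Pₙ₋₁ − Pₙ A X + ‖Pₙ‖² Aᵀ ‖Pₙ₋₁‖⁻² Pₙ₋₁ A X`,
as a matrix with entries in `ℝ[X]`, the terms containing `‖P₋₁‖⁻²` being set to `0`
when `n = 0`. -/
def matQP {N : ℕ} (S : Set ℝ) (w : Fin N → ℝ → ℝ) (p : Fin N → ℕ → Polynomial ℝ)
    (a : ℕ → ℝ) (n : ℕ) : Matrix (Fin N) (Fin N) (Polynomial ℝ) :=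
  let A := (nilA N a).map Polynomial.C
  let C : Matrix (Fin N) (Fin N) (Polynomial ℝ) :=
    (if n = 0 then (0 : Matrix (Fin N) (Fin N) ℝ)
      else nsq S w p n * (nilA N a)ᵀ * (nsq S w p (n - 1))⁻¹).map Polynomial.C
  Matrix.diagonal (fun i => p i n) + A * Matrix.diagonal (fun i => p i (n + 1))
    - C * Matrix.diagonal (fun i => p i (n - 1))
    - (Polynomial.X : Polynomial ℝ) • (Matrix.diagonal (fun i => p i n) * A)
    + (Polynomial.X : Polynomial ℝ) • (C * Matrix.diagonal (fun i => p i (n - 1)) * A)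

theorem matQP_apply' {N : ℕ} (S : Set ℝ) (w : Fin N → ℝ → ℝ) (p : Fin N → ℕ → Polynomial ℝ)
    (a : ℕ → ℝ) (n : ℕ) (i j : Fin N) :
    matQP S w p a n i j =
      (if i = j then p i n else 0)
      + Polynomial.C ((nilA N a) i j) * p j (n + 1)
      - Polynomial.C ((if n = 0 then (0 : Matrix (Fin N) (Fin N) ℝ)
          else nsq S w p n * (nilA N a)ᵀ * (nsq S w p (n - 1))⁻¹) i j) * p j (n - 1)
      - Polynomial.C ((nilA N a) i j) * (Polynomial.X * p i n)
      + ∑ l, Polynomial.C ((if n = 0 then (0 : Matrix (Fin N) (Fin N) ℝ)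
          else nsq S w p n * (nilA N a)ᵀ * (nsq S w p (n - 1))⁻¹) i l)
          * Polynomial.C ((nilA N a) l j) * (Polynomial.X * p l (n - 1)) := by
  simp only [matQP, Matrix.add_apply, Matrix.sub_apply, Matrix.smul_apply, smul_eq_mul,
    Matrix.mul_apply, Matrix.diagonal_apply, Matrix.map_apply, mul_ite, ite_mul, mul_zero,
    zero_mul, Finset.sum_ite_eq, Finset.sum_ite_eq', Finset.mem_univ, if_true, Finset.mul_sum]
  ring_nf
  congr 1
  exact Finset.sum_congr rfl fun l _ => by ring

theorem matQP_coeff {N : ℕ} (S : Set ℝ) (w : Fin N → ℝ → ℝ) (p : Fin N → ℕ → Polynomial ℝ)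
    (a : ℕ → ℝ) (n : ℕ) (i j : Fin N) (k : ℕ) :
    (matQP S w p a n i j).coeff k =
      (if i = j then (p i n).coeff k else 0)
      + (nilA N a) i j * (p j (n + 1)).coeff k
      - ((if n = 0 then (0 : Matrix (Fin N) (Fin N) ℝ)
          else nsq S w p n * (nilA N a)ᵀ * (nsq S w p (n - 1))⁻¹) i j) * (p j (n - 1)).coeff k
      - (nilA N a) i j * (Polynomial.X * p i n).coeff k
      + ∑ l, ((if n = 0 then (0 : Matrix (Fin N) (Fin N) ℝ)
          else nsq S w p n * (nilA N a)ᵀ * (nsq S w p (n - 1))⁻¹) i l)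
          * ((nilA N a) l j * (Polynomial.X * p l (n - 1)).coeff k) := by
  rw [matQP_apply']
  simp only [coeff_add, coeff_sub, finset_sum_coeff, mul_assoc, coeff_C_mul,
    apply_ite (fun q : Polynomial ℝ => q.coeff k), coeff_zero]

/-- Every entry of `Qₙ` has degree at most `n`, and the matrix of coefficients of `xⁿ`
(the leading coefficient of `Qₙ`) is invertible; i.e. `Qₙ` is a matrix polynomial of
degree `n` with nonsingular leading coefficient. -/
theorem matQP_degree_and_leading_coeff
    (N : ℕ) (x₀ x₁ : ℝ) (w : Fin N → ℝ → ℝ) (p : Fin N → ℕ → Polynomial ℝ)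
    (a : ℕ → ℝ)
    (hmeas : ∀ i, Measurable (w i))
    (hpos : ∀ i, ∀ᵐ x ∂volume, x ∈ Set.Ioo x₀ x₁ → 0 < w i x)
    (hsupp : ∀ i, ∀ x ∉ Set.Ioo x₀ x₁, w i x = 0)
    (hmom : ∀ i (n : ℕ), Integrable (fun x => |x| ^ n * w i x))
    (hmonic : ∀ i n, (p i n).Monic)
    (hdeg : ∀ i n, (p i n).natDegree = n)
    (horth : ∀ i, ∀ n m : ℕ, n ≠ m →
      ∫ x in Set.Ioo x₀ x₁, (p i n).eval x * (p i m).eval x * w i x = 0)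
    (hnorm : ∀ i n, 0 < ∫ x in Set.Ioo x₀ x₁, (p i n).eval x ^ 2 * w i x)
    (ha : ∀ k, 1 ≤ k → k ≤ N - 1 → a k ≠ 0) :
    ∀ n : ℕ,
      (∀ i j : Fin N, (matQP (Set.Ioo x₀ x₁) w p a n i j).natDegree ≤ n) ∧
      IsUnit (Matrix.of fun i j : Fin N =>
        (matQP (Set.Ioo x₀ x₁) w p a n i j).coeff n) := by
  classical
  intro n
  set S := Set.Ioo x₀ x₁ with hS
  set Anil := nilA N a with hAnil
  set Cm : Matrix (Fin N) (Fin N) ℝ :=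
    (if n = 0 then (0 : Matrix (Fin N) (Fin N) ℝ)
      else nsq S w p n * (nilA N a)ᵀ * (nsq S w p (n - 1))⁻¹) with hCm
  -- parity vanishing of Anil
  have hAcol : ∀ i k : Fin N, k.val % 2 = 0 → Anil i k = 0 := by
    intro i k hk
    simp only [hAnil, nilA, Matrix.of_apply]
    split_ifs with h1 h2 <;> [omega; omega; rfl]
  have hArow : ∀ i k : Fin N, i.val % 2 = 1 → Anil i k = 0 := by
    intro i k hi
    simp only [hAnil, nilA, Matrix.of_apply]
    split_ifs with h1 h2 <;> [omega; omega; rfl]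
  -- coefficient of degree k > n vanishes
  have hcoeff := fun (i j : Fin N) (k : ℕ) => matQP_coeff S w p a n i j k
  rw [← hAnil, ← hCm] at hcoeff
  have hd1 : ∀ i j : Fin N, (matQP S w p a n i j).natDegree ≤ n := by
    intro i j
    rw [natDegree_le_iff_coeff_eq_zero]
    intro m hm
    obtain ⟨m, rfl⟩ : ∃ m', m = m' + 1 := ⟨m - 1, by omega⟩
    rw [hcoeff]
    have h0 : (p i n).coeff (m + 1) = 0 :=
      coeff_eq_zero_of_natDegree_lt (by rw [hdeg]; omega)
    have e1 : (p j (n + 1)).coeff (m + 1) = (p i n).coeff m := by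
      rcases Nat.lt_or_ge n m with h | h
      · rw [coeff_eq_zero_of_natDegree_lt (by rw [hdeg]; omega),
          coeff_eq_zero_of_natDegree_lt (by rw [hdeg]; omega)]
      · have hmn : m = n := by omega
        subst hmn
        have := (hmonic j (m + 1)).coeff_natDegree
        rw [hdeg] at this
        rw [this]
        have := (hmonic i m).coeff_natDegree
        rw [hdeg] at this
        rw [this]
    have e2 : (p j (n - 1)).coeff (m + 1) = 0 :=
      coeff_eq_zero_of_natDegree_lt (by rw [hdeg]; omega)
    have e3 : ∀ l : Fin N, Cm i l * (Anil l j * (Polynomial.X * p l (n - 1)).coeff (m + 1)) = 0 := by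
      intro l
      by_cases hn : n = 0
      · simp [hCm, hn]
      · rw [coeff_X_mul, coeff_eq_zero_of_natDegree_lt (by rw [hdeg]; omega)]
        ring
    rw [coeff_X_mul, e1, e2, Finset.sum_eq_zero fun l _ => e3 l]
    simp [h0]
  refine ⟨hd1, ?_⟩
  -- the leading coefficient matrix
  set Mmat : Matrix (Fin N) (Fin N) ℝ :=
    Matrix.of (fun i j => Anil i j * ((p j (n + 1)).coeff n - (Polynomial.X * p i n).coeff n))
    with hMmat
  set Bmat : Matrix (Fin N) (Fin N) ℝ := Cm * Anil with hBmat
  have hK : (Matrix.of fun i j : Fin N => (matQP S w p a n i j).coeff n)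
      = 1 + Mmat + Bmat := by
    ext i j
    rw [Matrix.of_apply, hcoeff]
    have e2 : Cm i j * (p j (n - 1)).coeff n = 0 := by
      by_cases hn : n = 0
      · simp [hCm, hn]
      · rw [coeff_eq_zero_of_natDegree_lt (by rw [hdeg]; omega)]; ring
    have e3 : ∑ l, Cm i l * (Anil l j * (Polynomial.X * p l (n - 1)).coeff n) = Bmat i j := by
      by_cases hn : n = 0
      · simp [hCm, hBmat, hn]
      · obtain ⟨m, rfl⟩ : ∃ m', n = m' + 1 := ⟨n - 1, by omega⟩
        rw [hBmat, Matrix.mul_apply]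
        refine Finset.sum_congr rfl fun l _ => ?_
        rw [coeff_X_mul]
        simp only [Nat.add_sub_cancel]
        have := (hmonic l m).coeff_natDegree
        rw [hdeg] at this
        rw [this]
        ring
    have e0 : (if i = j then (p i n).coeff n else 0) = (1 : Matrix (Fin N) (Fin N) ℝ) i j := by
      have := (hmonic i n).coeff_natDegree
      rw [hdeg] at this
      rw [Matrix.one_apply, this]
    rw [e0, e2, e3]
    simp only [Matrix.add_apply, hMmat, Matrix.of_apply]
    ring
  rw [hK]
  -- Mmat is supported on (even, odd) entries, Bmat on (odd, odd) entries
  have hMcol : ∀ i k : Fin N, k.val % 2 = 0 → Mmat i k = 0 := by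
    intro i k hk; simp [hMmat, hAcol i k hk]
  have hMrow : ∀ i k : Fin N, i.val % 2 = 1 → Mmat i k = 0 := by
    intro i k hi; simp [hMmat, hArow i k hi]
  have hBcol : ∀ i k : Fin N, k.val % 2 = 0 → Bmat i k = 0 := by
    intro i k hk
    rw [hBmat, Matrix.mul_apply]
    exact Finset.sum_eq_zero fun l _ => by rw [hAcol l k hk, mul_zero]
  have hMM : Mmat * Mmat = 0 := by
    ext i j
    rw [Matrix.mul_apply, Matrix.zero_apply]
    refine Finset.sum_eq_zero fun k _ => ?_
    by_cases hk : k.val % 2 = 0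
    · rw [hMcol i k hk, zero_mul]
    · rw [hMrow k j (by omega), mul_zero]
  have hBM : Bmat * Mmat = 0 := by
    ext i j
    rw [Matrix.mul_apply, Matrix.zero_apply]
    refine Finset.sum_eq_zero fun k _ => ?_
    by_cases hk : k.val % 2 = 0
    · rw [hBcol i k hk, zero_mul]
    · rw [hMrow k j (by omega), mul_zero]
  have hMunit : IsUnit (1 + Mmat) := by
    have e : (1 + Mmat) * (1 - Mmat) = 1 - Mmat * Mmat := by noncomm_ring
    have e' : (1 - Mmat) * (1 + Mmat) = 1 - Mmat * Mmat := by noncomm_ring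
    exact isUnit_iff_exists.mpr ⟨1 - Mmat, by rw [e, hMM, sub_zero], by rw [e', hMM, sub_zero]⟩
  have hBunit : IsUnit (1 + Bmat) := by
    by_cases hn : n = 0
    · simp [hBmat, hCm, hn]
    · set d : Fin N → ℝ := fun i => ∫ x in S, (p i n).eval x ^ 2 * w i x with hd
      set e : Fin N → ℝ := fun i => ∫ x in S, (p i (n - 1)).eval x ^ 2 * w i x with he
      have hdpos : ∀ i, 0 < d i := fun i => hnorm i n
      have hepos : ∀ i, 0 < e i := fun i => hnorm i (n - 1)
      have hinv : (nsq S w p (n - 1))⁻¹ = Matrix.diagonal (fun i => (e i)⁻¹) := by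
        apply Matrix.inv_eq_right_inv
        rw [nsq, Matrix.diagonal_mul_diagonal]
        ext i j
        by_cases hij : i = j
        · subst hij
          simp only [Matrix.diagonal_apply_eq, Matrix.one_apply_eq]
          exact mul_inv_cancel₀ (hepos i).ne'
        · simp [Matrix.diagonal_apply_ne _ hij, Matrix.one_apply_ne hij]
      set T : Matrix (Fin N) (Fin N) ℝ :=
        Matrix.diagonal (fun i => (d i)⁻¹)
          + Anilᵀ * Matrix.diagonal (fun i => (e i)⁻¹) * Anil with hT
      have hfact : 1 + Bmat = Matrix.diagonal d * T := by
        rw [hT, Matrix.mul_add, Matrix.diagonal_mul_diagonal]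
        congr 1
        · ext i j
          by_cases hij : i = j
          · subst hij
            simp only [Matrix.diagonal_apply_eq, Matrix.one_apply_eq]
            exact (mul_inv_cancel₀ (hdpos i).ne').symm
          · simp [Matrix.diagonal_apply_ne _ hij, Matrix.one_apply_ne hij]
        · rw [hBmat, hCm, if_neg hn, hinv, nsq, ← hd, ← hAnil]
          noncomm_ring
      have hTpos : T.PosDef := by
        refine Matrix.PosDef.add_posSemidef
          (Matrix.posDef_diagonal_iff.mpr fun i => inv_pos.mpr (hdpos i)) ?_
        have := (Matrix.posSemidef_diagonal_iff.mpr
          fun i => (inv_pos.mpr (hepos i)).le).conjTranspose_mul_mul_same Anil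
        rwa [Matrix.conjTranspose_eq_transpose_of_trivial] at this
      rw [hfact]
      have hdu : IsUnit (Matrix.diagonal d) := by
        rw [Matrix.isUnit_iff_isUnit_det, Matrix.det_diagonal]
        exact (Finset.prod_pos fun i _ => hdpos i).ne'.isUnit
      exact hdu.mul hTpos.isUnit
  have hprod : (1 + Bmat) * (1 + Mmat) = 1 + Mmat + Bmat := by
    have : (1 + Bmat) * (1 + Mmat) = 1 + Mmat + Bmat + Bmat * Mmat := by noncomm_ring
    rw [this, hBM, add_zero]
  rw [← hprod]
  exact hBunit.mul hMunit


end
end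

section
/- Let w₁,…,w_N be scalar weights on (x₀,x₁) with monic orthogonal polynomial sequences pⁱ, and let Qₙ and T(x) = I + Ax be constructed as in the setup. Suppose there exist m ≥ 0, polynomials f_{i,j} ∈ ℝ[x] (1 ≤ i ≤ N, 0 ≤ j ≤ m), and real numbers λ_{n,i} such that Σ_{j=0}^{m} (pₙⁱ)^{(j)}(x)·f_{i,j}(x) = λ_{n,i}·pₙⁱ(x) for all n ≥ 0 and all i (each pⁱ is an eigenfunction of the scalar differential operator δᵢ = Σⱼ ∂ʲf_{i,j}). Assume the eigenvalue matching conditions: λ_{n,2i−1} = λ_{n+1,2i} for all n ≥ 0 and 1 ≤ i ≤ ⌊N/2⌋, and λ_{n+1,2i} = λ_{n,2i+1} for all n ≥ 0 and 1 ≤ i ≤ ⌊(N−1)/2⌋. Then for all n ≥ 0 and all x: Σ_{j=0}^{m} (d/dx)ʲ[Qₙ(x)T(x)]·diag(f_{1,j}(x),…,f_{N,j}(x)) = diag(λ_{n,1},…,λ_{n,N})·Qₙ(x)·T(x). Equivalently, Qₙ is an eigenfunction of the matrix differential operator D = T(x)·diag(δ₁,…,δ_N)·T(x)⁻¹ with eigenvalue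 diag(λ_{n,1},…,λ_{n,N}). -/
open MeasureTheory Matrix Polynomial

noncomputable section

/-!
For every diagonal `D` one has `A D A = 0`, because the columns of `A` with nonzero entries
have odd (0-based) index while its nonzero rows have even index. Hence, after multiplication by
`T(x) = I + A x`, all terms linear in `x` cancel and `Qₙ T = Pₙ + A Pₙ₊₁ − Cₙ Pₙ₋₁` with the
constant matrix `Cₙ = ‖Pₙ‖² Aᵀ ‖Pₙ₋₁‖⁻²`. The operator `∑ ∂ʲ diag(f_{·,j})` acts on `M Pₗ` for a
constant `M` through the scalar eigen-equations, giving `M Λₗ Pₗ`, and the matching conditions are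
exactly the intertwining relations `Λₙ A = A Λₙ₊₁` and `Λₙ Aᵀ = Aᵀ Λₙ₋₁`.
-/

open Finset

section Staircase

variable {N : ℕ} {a : ℕ → ℝ}

lemma nilA_mul_diagonal_mul_nilA (d : Fin N → ℝ) :
    nilA N a * (diagonal d * nilA N a) = 0 := by
  ext i k
  simp only [mul_apply, diagonal_apply, ite_mul, zero_mul, sum_ite_eq, mem_univ, if_true,
    Matrix.zero_apply]
  refine sum_eq_zero fun c _ => ?_
  rcases Nat.even_or_odd c.val with hc | hc
  · have h : nilA N a i c = 0 := by
      rw [Nat.even_iff] at hc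
      simp only [nilA, of_apply]
      split_ifs <;> first | rfl | omega
    rw [h, zero_mul]
  · have h : nilA N a c k = 0 := by
      rw [Nat.odd_iff] at hc
      simp only [nilA, of_apply]
      split_ifs <;> first | rfl | omega
    rw [h, mul_zero, mul_zero]

lemma diagonal_mul_nilA {μ ν : Fin N → ℝ}
    (h₁ : ∀ c : Fin N, c.val % 2 = 1 →
      μ ⟨c.val - 1, Nat.lt_of_le_of_lt (Nat.sub_le _ _) c.isLt⟩ = ν c)
    (h₂ : ∀ c : Fin N, c.val % 2 = 1 → ∀ h : c.val + 1 < N, ν c = μ ⟨c.val + 1, h⟩) :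
    diagonal μ * nilA N a = nilA N a * diagonal ν := by
  ext i k
  simp only [diagonal_mul, mul_diagonal, nilA, of_apply]
  split_ifs with hup hdown
  · have hi : μ i = ν k := by
      rw [← h₁ k hup.1]
      exact congrArg μ (Fin.ext (by simp only; omega))
    rw [hi, mul_comm]
  · have hi : μ i = ν k := by
      rw [h₂ k hdown.1 (by omega)]
      exact congrArg μ (Fin.ext hdown.2)
    rw [hi, mul_comm]
  · simp

lemma diagonal_mul_nilA_transpose {μ ν : Fin N → ℝ}
    (h : diagonal μ * nilA N a = nilA N a * diagonal ν) :
    diagonal ν * (nilA N a)ᵀ = (nilA N a)ᵀ * diagonal μ := by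
  simpa only [transpose_mul, diagonal_transpose] using (congrArg transpose h).symm

end Staircase

/-- The constant matrix `Cₙ = ‖Pₙ‖² Aᵀ ‖Pₙ₋₁‖⁻²` occurring in `matQ` (with `C₀ = 0`). -/
def matC {N : ℕ} (S : Set ℝ) (w : Fin N → ℝ → ℝ) (p : Fin N → ℕ → Polynomial ℝ)
    (a : ℕ → ℝ) (n : ℕ) : Matrix (Fin N) (Fin N) ℝ :=
  if n = 0 then 0 else nsq S w p n * (nilA N a)ᵀ * (nsq S w p (n - 1))⁻¹

section MatQ

variable {N : ℕ} {S : Set ℝ} {w : Fin N → ℝ → ℝ} {p : Fin N → ℕ → Polynomial ℝ} {a : ℕ → ℝ}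

lemma matQ_mul_one_add_smul_nilA (n : ℕ) (y : ℝ) :
    matQ S w p a n y * (1 + y • nilA N a)
      = diagP p n y + nilA N a * diagP p (n + 1) y - matC S w p a n * diagP p (n - 1) y := by
  have hAA : nilA N a * nilA N a = 0 := by
    simpa using nilA_mul_diagonal_mul_nilA (a := a) (fun _ => (1 : ℝ))
  have hADA (ℓ : ℕ) : nilA N a * (diagP p ℓ y * nilA N a) = 0 :=
    nilA_mul_diagonal_mul_nilA _
  simp only [matQ, matC, mul_add, mul_one, add_mul, sub_mul, Matrix.smul_mul, Matrix.mul_smul,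
    Matrix.mul_assoc, hAA, hADA, mul_zero, smul_zero, add_zero, sub_zero]
  abel

lemma diagonal_mul_matC {μ ν : Fin N → ℝ} {n : ℕ}
    (h : n ≠ 0 → diagonal μ * (nilA N a)ᵀ = (nilA N a)ᵀ * diagonal ν) :
    diagonal μ * matC S w p a n = matC S w p a n * diagonal ν := by
  unfold matC
  split_ifs with hn
  · simp
  · rw [nsq, nsq, inv_diagonal, Matrix.mul_assoc, Matrix.mul_assoc, Matrix.mul_assoc,
      (commute_diagonal _ _).eq, ← Matrix.mul_assoc (diagonal μ), (commute_diagonal _ _).eq,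
      Matrix.mul_assoc, ← Matrix.mul_assoc (diagonal μ), h hn]
    simp only [Matrix.mul_assoc]

end MatQ

/-- The right action `G · ∑_{j ≤ m} ∂ʲ diag(f_{1,j}, …, f_{N,j})` of a diagonal differential
operator on a matrix-valued function `G`, evaluated at `x`. -/
def diagDiffOp {N : ℕ} (m : ℕ) (f : Fin N → ℕ → Polynomial ℝ)
    (G : ℝ → Matrix (Fin N) (Fin N) ℝ) (x : ℝ) : Matrix (Fin N) (Fin N) ℝ :=
  ∑ j ∈ range (m + 1),
    (of fun i k => iteratedDeriv j (fun y => G y i k) x) * diagonal (fun k => (f k j).eval x)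

section DiagDiffOp

variable {N : ℕ} {m : ℕ} {f : Fin N → ℕ → Polynomial ℝ} {G H : ℝ → Matrix (Fin N) (Fin N) ℝ}

lemma diagDiffOp_add (hG : ∀ i k, ContDiff ℝ ⊤ fun y => G y i k)
    (hH : ∀ i k, ContDiff ℝ ⊤ fun y => H y i k) (x : ℝ) :
    diagDiffOp m f (fun y => G y + H y) x = diagDiffOp m f G x + diagDiffOp m f H x := by
  simp only [diagDiffOp, ← sum_add_distrib, ← Matrix.add_mul, Matrix.add_apply]
  refine sum_congr rfl fun j _ => congrArg (· * _) ?_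
  ext i k
  exact iteratedDeriv_fun_add ((hG i k).contDiffAt.of_le le_top)
    ((hH i k).contDiffAt.of_le le_top)

lemma diagDiffOp_sub (hG : ∀ i k, ContDiff ℝ ⊤ fun y => G y i k)
    (hH : ∀ i k, ContDiff ℝ ⊤ fun y => H y i k) (x : ℝ) :
    diagDiffOp m f (fun y => G y - H y) x = diagDiffOp m f G x - diagDiffOp m f H x := by
  simp only [diagDiffOp, ← sum_sub_distrib, ← Matrix.sub_mul, Matrix.sub_apply]
  refine sum_congr rfl fun j _ => congrArg (· * _) ?_
  ext i k
  exact iteratedDeriv_fun_sub ((hG i k).contDiffAt.of_le le_top)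
    ((hH i k).contDiffAt.of_le le_top)

variable {p : Fin N → ℕ → Polynomial ℝ} {lam : ℕ → Fin N → ℝ}

lemma contDiff_mul_diagP_apply (M : Matrix (Fin N) (Fin N) ℝ) (ℓ : ℕ) (i k : Fin N) :
    ContDiff ℝ ⊤ fun y => (M * diagP p ℓ y) i k := by
  simp only [diagP, mul_diagonal]
  exact contDiff_const.mul (by simpa using (p k ℓ).contDiff_aeval (𝕜 := ℝ) ⊤)

lemma contDiff_diagP_apply (ℓ : ℕ) (i k : Fin N) : ContDiff ℝ ⊤ fun y => diagP p ℓ y i k := by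
  simpa using contDiff_mul_diagP_apply 1 ℓ i k

lemma diagDiffOp_mul_diagP
    (heig : ∀ i (n : ℕ) (x : ℝ),
      ∑ j ∈ range (m + 1), iteratedDeriv j (fun y => (p i n).eval y) x * (f i j).eval x
        = lam n i * (p i n).eval x)
    (M : Matrix (Fin N) (Fin N) ℝ) (ℓ : ℕ) (x : ℝ) :
    diagDiffOp m f (fun y => M * diagP p ℓ y) x = M * diagonal (lam ℓ) * diagP p ℓ x := by
  ext i k
  simp only [diagDiffOp, diagP, Matrix.sum_apply, mul_diagonal, of_apply,
    iteratedDeriv_const_mul_field, mul_assoc, ← mul_sum, heig]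

lemma diagDiffOp_diagP
    (heig : ∀ i (n : ℕ) (x : ℝ),
      ∑ j ∈ range (m + 1), iteratedDeriv j (fun y => (p i n).eval y) x * (f i j).eval x
        = lam n i * (p i n).eval x)
    (ℓ : ℕ) (x : ℝ) :
    diagDiffOp m f (diagP p ℓ) x = diagonal (lam ℓ) * diagP p ℓ x := by
  simpa using diagDiffOp_mul_diagP heig 1 ℓ x

end DiagDiffOp

theorem matQ_bispectral_general
    (N : ℕ) (x₀ x₁ : ℝ) (w : Fin N → ℝ → ℝ) (p : Fin N → ℕ → Polynomial ℝ)
    (a : ℕ → ℝ)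
    (m : ℕ) (f : Fin N → ℕ → Polynomial ℝ) (lam : ℕ → Fin N → ℝ)
    (heig : ∀ i (n : ℕ) (x : ℝ),
      ∑ j ∈ Finset.range (m + 1),
        iteratedDeriv j (fun y => (p i n).eval y) x * (f i j).eval x
      = lam n i * (p i n).eval x)
    (hmatch₁ : ∀ (n : ℕ) (c : Fin N), c.val % 2 = 1 →
      lam n ⟨c.val - 1, Nat.lt_of_le_of_lt (Nat.sub_le _ _) c.isLt⟩ = lam (n + 1) c)
    (hmatch₂ : ∀ (n : ℕ) (c : Fin N), c.val % 2 = 1 → ∀ h : c.val + 1 < N,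
      lam (n + 1) c = lam n ⟨c.val + 1, h⟩) :
    ∀ (n : ℕ) (x : ℝ),
      ∑ j ∈ Finset.range (m + 1),
        (Matrix.of fun i k : Fin N =>
          iteratedDeriv j
            (fun y => (matQ (Set.Ioo x₀ x₁) w p a n y * (1 + y • nilA N a)) i k) x) *
          Matrix.diagonal (fun k => (f k j).eval x)
      = Matrix.diagonal (fun i => lam n i) *
          (matQ (Set.Ioo x₀ x₁) w p a n x * (1 + x • nilA N a)) := by
  intro n x
  have hA : diagonal (lam n) * nilA N a = nilA N a * diagonal (lam (n + 1)) :=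
    diagonal_mul_nilA (hmatch₁ n) (hmatch₂ n)
  have hC : diagonal (lam n) * matC (Set.Ioo x₀ x₁) w p a n
      = matC (Set.Ioo x₀ x₁) w p a n * diagonal (lam (n - 1)) := by
    refine diagonal_mul_matC fun hn => diagonal_mul_nilA_transpose ?_
    obtain ⟨n, rfl⟩ := Nat.exists_eq_succ_of_ne_zero hn
    exact diagonal_mul_nilA (hmatch₁ n) (hmatch₂ n)
  change diagDiffOp m f (fun y => matQ (Set.Ioo x₀ x₁) w p a n y * (1 + y • nilA N a)) x = _
  simp only [matQ_mul_one_add_smul_nilA]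
  have hP := contDiff_diagP_apply (p := p)
  have hM := contDiff_mul_diagP_apply (p := p)
  rw [diagDiffOp_sub _ (hM _ (n - 1)), diagDiffOp_add (hP n) (hM _ (n + 1)),
    diagDiffOp_diagP heig, diagDiffOp_mul_diagP heig, diagDiffOp_mul_diagP heig,
    mul_sub, mul_add, ← Matrix.mul_assoc, ← Matrix.mul_assoc, hA, hC]
  exact fun i k => (hP n i k).add (hM _ (n + 1) i k)

/-- If each scalar sequence `pⁱ` is an eigenfunction of a differential operator
`δᵢ = ∑_{j=0}^{m} ∂ʲ f_{i,j}` with eigenvalues `λ_{n,i}` satisfying the matching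
conditions `λ_{n,2i−1} = λ_{n+1,2i}` and `λ_{n+1,2i} = λ_{n,2i+1}` (1-based indices),
then `Qₙ` is an eigenfunction of `D = T(x) diag(δ₁,…,δ_N) T(x)⁻¹`:
`∑_{j=0}^{m} (d/dx)ʲ[Qₙ(x)T(x)] · diag(f_{1,j}(x),…,f_{N,j}(x))
  = diag(λ_{n,1},…,λ_{n,N}) · Qₙ(x) T(x)`. -/
theorem matQ_bispectral
    (N : ℕ) (x₀ x₁ : ℝ) (w : Fin N → ℝ → ℝ) (p : Fin N → ℕ → Polynomial ℝ)
    (a : ℕ → ℝ)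
    (hmeas : ∀ i, Measurable (w i))
    (hpos : ∀ i, ∀ᵐ x ∂volume, x ∈ Set.Ioo x₀ x₁ → 0 < w i x)
    (hsupp : ∀ i, ∀ x ∉ Set.Ioo x₀ x₁, w i x = 0)
    (hmom : ∀ i (n : ℕ), Integrable (fun x => |x| ^ n * w i x))
    (hmonic : ∀ i n, (p i n).Monic)
    (hdeg : ∀ i n, (p i n).natDegree = n)
    (horth : ∀ i, ∀ n m : ℕ, n ≠ m →
      ∫ x in Set.Ioo x₀ x₁, (p i n).eval x * (p i m).eval x * w i x = 0)
    (hnorm : ∀ i n, 0 < ∫ x in Set.Ioo x₀ x₁, (p i n).eval x ^ 2 * w i x)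
    (ha : ∀ k, 1 ≤ k → k ≤ N - 1 → a k ≠ 0)
    (m : ℕ) (f : Fin N → ℕ → Polynomial ℝ) (lam : ℕ → Fin N → ℝ)
    (heig : ∀ i (n : ℕ) (x : ℝ),
      ∑ j ∈ Finset.range (m + 1),
        iteratedDeriv j (fun y => (p i n).eval y) x * (f i j).eval x
      = lam n i * (p i n).eval x)
    (hmatch₁ : ∀ (n : ℕ) (c : Fin N), c.val % 2 = 1 →
      lam n ⟨c.val - 1, Nat.lt_of_le_of_lt (Nat.sub_le _ _) c.isLt⟩ = lam (n + 1) c)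
    (hmatch₂ : ∀ (n : ℕ) (c : Fin N), c.val % 2 = 1 → ∀ h : c.val + 1 < N,
      lam (n + 1) c = lam n ⟨c.val + 1, h⟩) :
    ∀ (n : ℕ) (x : ℝ),
      ∑ j ∈ Finset.range (m + 1),
        (Matrix.of fun i k : Fin N =>
          iteratedDeriv j
            (fun y => (matQ (Set.Ioo x₀ x₁) w p a n y * (1 + y • nilA N a)) i k) x) *
          Matrix.diagonal (fun k => (f k j).eval x)
      = Matrix.diagonal (fun i => lam n i) *
          (matQ (Set.Ioo x₀ x₁) w p a n x * (1 + x • nilA N a)) :=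
  matQ_bispectral_general N x₀ x₁ w p a m f lam heig hmatch₁ hmatch₂

end
end

section
/- Let w₁, w₂ be scalar weights on (x₀,x₁), let a ∈ ℝ∖{0}, and let W(x) = [[w₁(x) + a²x²w₂(x), a·x·w₂(x)], [a·x·w₂(x), w₂(x)]] for x ∈ (x₀,x₁). Then there exists an invertible matrix M ∈ Mat₂(ℂ) such that M·W(x)·M* is a diagonal matrix for almost every x ∈ (x₀,x₁) if and only if there exist real numbers b < c with (x₀,x₁) ⊆ (b,c) such that w₁(x) = a²·w₂(x)·(x−b)(c−x) for almost every x ∈ (x₀,x₁). In particular, if x₀ = −∞ or x₁ = +∞, then no such M exists, i.e., W is an irreducible weight matrix. -/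
open MeasureTheory Matrix

noncomputable section

/-- The (possibly unbounded) open interval `(x₀, x₁) ⊆ ℝ` with extended-real
endpoints. -/
def ESet (x₀ x₁ : EReal) : Set ℝ :=
  {x : ℝ | x₀ < (x : EReal) ∧ (x : EReal) < x₁}

/-- The 2×2 weight matrix
`W(x) = [[w₁(x) + a²x²w₂(x), a x w₂(x)], [a x w₂(x), w₂(x)]]`. -/
def W2 (w₁ w₂ : ℝ → ℝ) (a : ℝ) (x : ℝ) : Matrix (Fin 2) (Fin 2) ℝ :=
  !![w₁ x + a ^ 2 * x ^ 2 * w₂ x, a * x * w₂ x;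
     a * x * w₂ x, w₂ x]

/-- `W` reduces to a direct sum of scalar weights on `S`: there is an invertible
complex matrix `M` with `M W(x) M*` diagonal for almost every `x ∈ S`. -/
def Reduces2 (S : Set ℝ) (W : ℝ → Matrix (Fin 2) (Fin 2) ℝ) : Prop :=
  ∃ M : Matrix (Fin 2) (Fin 2) ℂ, IsUnit M ∧
    ∀ᵐ x ∂volume, x ∈ S → ∀ i j : Fin 2, i ≠ j →
      (M * (W x).map (fun t => (t : ℂ)) * Mᴴ) i j = 0

lemma WR_exists_mem_of_ae {S A : Set ℝ} {p : ℝ → Prop}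
    (h : ∀ᵐ x ∂volume, x ∈ S → p x) (hA : A ⊆ S) (hm : 0 < volume A) :
    ∃ x ∈ A, p x := by
  have hN : volume {x | ¬ (x ∈ S → p x)} = 0 := ae_iff.1 h
  have hv : volume (A \ {x | ¬ (x ∈ S → p x)}) = volume A := measure_diff_null hN
  obtain ⟨x, hxA, hxN⟩ := nonempty_of_measure_ne_zero (by rw [hv]; exact hm.ne')
  exact ⟨x, hxA, (not_not.mp hxN) (hA hxA)⟩

lemma WR_two_points {S : Set ℝ} {p : ℝ → Prop}
    (h : ∀ᵐ x ∂volume, x ∈ S → p x) (hm : 0 < volume S) :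
    ∃ x y : ℝ, x ≠ y ∧ p x ∧ p y := by
  set B := {x | x ∈ S ∧ p x} with hBdef
  have hsub : S \ {x | ¬ (x ∈ S → p x)} ⊆ B := fun x hx => ⟨hx.1, not_not.mp hx.2 hx.1⟩
  have hBpos : volume B ≠ 0 := by
    have h1 := measure_mono (μ := volume) hsub
    rw [measure_diff_null (ae_iff.1 h)] at h1
    exact fun h0 => by simp [h0] at h1; exact absurd h1 hm.ne'
  have hBinf : B.Infinite := fun hf => hBpos (hf.measure_zero _)
  obtain ⟨x, hx, y, hy, hxy⟩ := hBinf.nontrivial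
  exact ⟨x, y, hxy, hx.2, hy.2⟩


lemma WR_offdiag01 (M : Matrix (Fin 2) (Fin 2) ℂ) (w₁ w₂ : ℝ → ℝ) (a x : ℝ) :
  (M * (W2 w₁ w₂ a x).map (fun t => (t:ℂ)) * Mᴴ) 0 1 =
    M 0 0 * star (M 1 0) * (w₁ x : ℂ) +
      (w₂ x:ℂ) * ((a:ℂ)*x*M 0 0 + M 0 1) * ((a:ℂ)*x*star (M 1 0) + star (M 1 1)) := by
  simp [W2, Matrix.mul_apply, Fin.sum_univ_two, Matrix.conjTranspose_apply, Matrix.map_apply]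
  ring

-- forward direction
set_option maxHeartbeats 1000000 in
lemma WR_forward (x₀ x₁ : EReal) (hlt : x₀ < x₁) (w₁ w₂ : ℝ → ℝ) (a : ℝ) (ha : a ≠ 0)
    (hpos₁ : ∀ᵐ x ∂volume, x ∈ ESet x₀ x₁ → 0 < w₁ x)
    (hpos₂ : ∀ᵐ x ∂volume, x ∈ ESet x₀ x₁ → 0 < w₂ x)
    (hred : Reduces2 (ESet x₀ x₁) (W2 w₁ w₂ a)) :
    ∃ b c : ℝ, b < c ∧ ESet x₀ x₁ ⊆ Set.Ioo b c ∧
      ∀ᵐ x ∂volume, x ∈ ESet x₀ x₁ → w₁ x = a ^ 2 * w₂ x * (x - b) * (c - x) := by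
  obtain ⟨z, hz1, hz2⟩ := EReal.exists_between_coe_real hlt
  have hSopen : IsOpen (ESet x₀ x₁) := by
    have : ESet x₀ x₁ = (fun x : ℝ => (x:EReal)) ⁻¹' (Set.Ioo x₀ x₁) := rfl
    rw [this]; exact isOpen_Ioo.preimage continuous_coe_real_ereal
  have hSpos : 0 < volume (ESet x₀ x₁) := hSopen.measure_pos volume ⟨z, hz1, hz2⟩
  obtain ⟨M, hMunit, hae⟩ := hred
  have hdet : M.det ≠ 0 := by
    intro h0
    have := (Matrix.isUnit_iff_isUnit_det M).mp hMunit
    rw [h0] at this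
    exact (by simpa using this : False)
  set u0 := M 0 0 with hu0def
  set u1 := M 0 1 with hu1def
  set r0 := star (M 1 0) with hr0def
  set r1 := star (M 1 1) with hr1def
  set E : ℝ → ℂ := fun x => u0 * r0 * (w₁ x : ℂ) +
      (w₂ x:ℂ) * ((a:ℂ)*x*u0 + u1) * ((a:ℂ)*x*r0 + r1) with hEdef
  have key : ∀ᵐ x ∂volume, x ∈ ESet x₀ x₁ → (0 < w₁ x ∧ 0 < w₂ x ∧ E x = 0) := by
    filter_upwards [hpos₁, hpos₂, hae] with x h1 h2 h3 hx
    refine ⟨h1 hx, h2 hx, ?_⟩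
    have := h3 hx 0 1 (by decide)
    rw [WR_offdiag01] at this
    exact this
  -- two distinct good points
  obtain ⟨x, y, hxy, hx, hy⟩ := WR_two_points key hSpos
  have hdet2 : M.det = M 0 0 * M 1 1 - M 0 1 * M 1 0 := Matrix.det_fin_two M
  -- u0 ≠ 0
  have hu0 : u0 ≠ 0 := by
    intro h0
    have hx' : (w₂ x : ℂ) * u1 * ((a:ℂ)*x*r0 + r1) = 0 := by
      have := hx.2.2; rw [hEdef] at this; simp only [h0] at this
      linear_combination this
    have hy' : (w₂ y : ℂ) * u1 * ((a:ℂ)*y*r0 + r1) = 0 := by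
      have := hy.2.2; rw [hEdef] at this; simp only [h0] at this
      linear_combination this
    have hw2x : (w₂ x : ℂ) ≠ 0 := by exact_mod_cast hx.2.1.ne'
    have hw2y : (w₂ y : ℂ) ≠ 0 := by exact_mod_cast hy.2.1.ne'
    rcases mul_eq_zero.mp hx' with h | hx'' 
    · rcases mul_eq_zero.mp h with h | h
      · exact hw2x h
      · -- u1 = 0, row 0 of M is zero
        apply hdet
        rw [hdet2, ← hu0def, ← hu1def, h0, h]; ring
    · rcases mul_eq_zero.mp hy' with h | hy''
      · rcases mul_eq_zero.mp h with h | h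
        · exact hw2y h
        · apply hdet; rw [hdet2, ← hu0def, ← hu1def, h0, h]; ring
      · -- a x r0 + r1 = 0 and a y r0 + r1 = 0
        have hr0z : r0 = 0 := by
          have h3 : (a:ℂ) * (x - y) * r0 = 0 := by linear_combination hx'' - hy''
          rcases mul_eq_zero.mp h3 with h | h
          · rcases mul_eq_zero.mp h with h | h
            · exact absurd h (by exact_mod_cast ha)
            · exact absurd h (by
                intro h'; exact hxy (by exact_mod_cast sub_eq_zero.mp h))
          · exact h
        have hr1z : r1 = 0 := by
          have := hx''; rw [hr0z] at this; linear_combination this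
        apply hdet
        have h10 : M 1 0 = 0 := by
          have := congrArg star hr0z; rw [hr0def] at this; simpa using this
        have h11 : M 1 1 = 0 := by
          have := congrArg star hr1z; rw [hr1def] at this; simpa using this
        rw [hdet2, h10, h11]; ring
  have hr0 : r0 ≠ 0 := by
    intro h0
    have hx' : (w₂ x : ℂ) * r1 * ((a:ℂ)*x*u0 + u1) = 0 := by
      have := hx.2.2; rw [hEdef] at this; simp only [h0] at this
      linear_combination this
    have hy' : (w₂ y : ℂ) * r1 * ((a:ℂ)*y*u0 + u1) = 0 := by
      have := hy.2.2; rw [hEdef] at this; simp only [h0] at this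
      linear_combination this
    have hw2x : (w₂ x : ℂ) ≠ 0 := by exact_mod_cast hx.2.1.ne'
    have hw2y : (w₂ y : ℂ) ≠ 0 := by exact_mod_cast hy.2.1.ne'
    rcases mul_eq_zero.mp hx' with h | hx''
    · rcases mul_eq_zero.mp h with h | h
      · exact hw2x h
      · apply hdet
        have h11 : M 1 1 = 0 := by
          have := congrArg star h; rw [hr1def] at this; simpa using this
        have h10 : M 1 0 = 0 := by
          have := congrArg star h0; rw [hr0def] at this; simpa using this
        rw [hdet2, h10, h11]; ring
    · rcases mul_eq_zero.mp hy' with h | hy''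
      · rcases mul_eq_zero.mp h with h | h
        · exact hw2y h
        · apply hdet
          have h11 : M 1 1 = 0 := by
            have := congrArg star h; rw [hr1def] at this; simpa using this
          have h10 : M 1 0 = 0 := by
            have := congrArg star h0; rw [hr0def] at this; simpa using this
          rw [hdet2, h10, h11]; ring
      · have hu0z : u0 = 0 := by
          have h3 : (a:ℂ) * (x - y) * u0 = 0 := by linear_combination hx'' - hy''
          rcases mul_eq_zero.mp h3 with h | h
          · rcases mul_eq_zero.mp h with h | h
            · exact absurd h (by exact_mod_cast ha)
            · exact absurd h (by
                intro h'; exact hxy (by exact_mod_cast sub_eq_zero.mp h))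
          · exact h
        exact hu0 hu0z
  set κ : ℂ := u0 * r0 with hκdef
  have hκ : κ ≠ 0 := mul_ne_zero hu0 hr0
  set p : ℂ := -((a:ℂ) * (u0 * r1 + u1 * r0)) / κ with hpdef
  set q : ℂ := -(u1 * r1) / κ with hqdef
  have hPQ : ∀ t : ℝ, E t = 0 →
      (w₁ t : ℂ) = (w₂ t) * (-(a:ℂ)^2*t^2 + p*t + q) := by
    intro t hE
    rw [hEdef] at hE
    simp only [] at hE
    rw [hκdef] at hE
    apply mul_left_cancel₀ hκ
    rw [hpdef, hqdef]
    field_simp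
    linear_combination hE
  have him : ∀ t : ℝ, E t = 0 → 0 < w₂ t → p.im * t + q.im = 0 := by
    intro t hE hw
    have h1 := hPQ t hE
    have h2 := congrArg Complex.im h1
    simp [Complex.add_im, Complex.mul_im, Complex.mul_re, Complex.ofReal_im,
      Complex.ofReal_re, pow_two] at h2
    rcases h2 with h2 | h2
    · exact absurd h2 hw.ne'
    · linarith [h2]
  have hxim := him x hx.2.2 hx.2.1
  have hyim := him y hy.2.2 hy.2.1
  have hpim : p.im = 0 := by
    have h3 : p.im * (x - y) = 0 := by linear_combination hxim - hyim
    rcases mul_eq_zero.mp h3 with h | h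
    · exact h
    · exact absurd (sub_eq_zero.mp h) hxy
  have hqim : q.im = 0 := by
    rw [hpim] at hxim; linarith [hxim]
  set P := p.re with hPdef
  set Q := q.re with hQdef
  have hp' : p = (P:ℂ) := by
    apply Complex.ext <;> simp [hpim, hPdef]
  have hq' : q = (Q:ℂ) := by
    apply Complex.ext <;> simp [hqim, hQdef]
  have hrealeq : ∀ t : ℝ, E t = 0 → w₁ t = w₂ t * (-a^2*t^2 + P*t + Q) := by
    intro t hE
    have h1 := hPQ t hE
    rw [hp', hq'] at h1
    exact_mod_cast h1
  have hrealae : ∀ᵐ t ∂volume, t ∈ ESet x₀ x₁ →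
      (0 < w₁ t ∧ 0 < w₂ t ∧ w₁ t = w₂ t * (-a^2*t^2 + P*t + Q)) := by
    filter_upwards [key] with t ht hts
    exact ⟨(ht hts).1, (ht hts).2.1, hrealeq t (ht hts).2.2⟩
  have ha2 : (0:ℝ) < a^2 := by positivity
  have hfx : 0 < -a^2*x^2 + P*x + Q := by
    have h1 := hrealeq x hx.2.2
    by_contra h
    push_neg at h
    nlinarith [hx.1, hx.2.1, mul_nonneg hx.2.1.le (neg_nonneg.mpr h)]
  have hD : 0 < P^2 + 4*a^2*Q := by
    nlinarith [sq_nonneg (P - 2*a^2*x), mul_pos ha2 hfx]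
  set s := Real.sqrt (P^2 + 4*a^2*Q) with hsdef
  have hs2 : s^2 = P^2 + 4*a^2*Q := Real.sq_sqrt hD.le
  have hspos : 0 < s := Real.sqrt_pos.mpr hD
  set b := (P - s)/(2*a^2) with hbdef
  set c := (P + s)/(2*a^2) with hcdef
  have hbc : b < c := by
    rw [hbdef, hcdef]
    have h2a : (0:ℝ) < 2*a^2 := by positivity
    rw [div_lt_div_iff₀ h2a h2a]
    nlinarith [hspos, h2a]
  have hkey : ∀ t : ℝ, -a^2*t^2 + P*t + Q = a^2*(t-b)*(c-t) := by
    intro t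
    rw [hbdef, hcdef]
    field_simp
    ring_nf
    nlinarith [hs2]
  have hsubset : ESet x₀ x₁ ⊆ Set.Ioo b c := by
    intro s0 hs0
    by_contra hnot
    obtain ⟨ε, hε, hball⟩ := Metric.isOpen_iff.mp hSopen s0 hs0
    rw [Set.mem_Ioo] at hnot
    push_neg at hnot
    rcases le_or_gt s0 b with hsb | hbs
    · have hA : Set.Ioo (s0-ε) s0 ⊆ ESet x₀ x₁ := by
        intro u hu
        apply hball
        rw [Set.mem_Ioo] at hu
        rw [Metric.mem_ball, Real.dist_eq, abs_lt]
        constructor <;> linarith [hu.1, hu.2]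
      have hApos : 0 < volume (Set.Ioo (s0-ε) s0) := by
        rw [Real.volume_Ioo]
        apply ENNReal.ofReal_pos.mpr
        linarith
      obtain ⟨u, hu, h1, h2, h3⟩ := WR_exists_mem_of_ae hrealae hA hApos
      rw [Set.mem_Ioo] at hu
      have hf : -a^2*u^2 + P*u + Q < 0 := by
        rw [hkey u]
        have h5 : u - b < 0 := by linarith [hu.2]
        have h6 : 0 < c - u := by linarith [hu.2]
        exact mul_neg_of_neg_of_pos (mul_neg_of_pos_of_neg ha2 h5) h6
      have hlt0 : w₂ u * (-a^2*u^2 + P*u + Q) < 0 := mul_neg_of_pos_of_neg h2 hf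
      rw [← h3] at hlt0
      linarith
    · have hcs := hnot hbs
      have hA : Set.Ioo s0 (s0+ε) ⊆ ESet x₀ x₁ := by
        intro u hu
        apply hball
        rw [Set.mem_Ioo] at hu
        rw [Metric.mem_ball, Real.dist_eq, abs_lt]
        constructor <;> linarith [hu.1, hu.2]
      have hApos : 0 < volume (Set.Ioo s0 (s0+ε)) := by
        rw [Real.volume_Ioo]
        apply ENNReal.ofReal_pos.mpr
        linarith
      obtain ⟨u, hu, h1, h2, h3⟩ := WR_exists_mem_of_ae hrealae hA hApos
      rw [Set.mem_Ioo] at hu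
      have hf : -a^2*u^2 + P*u + Q < 0 := by
        rw [hkey u]
        have h5 : 0 < u - b := by linarith [hu.1]
        have h6 : c - u < 0 := by linarith [hu.1]
        exact mul_neg_of_pos_of_neg (mul_pos ha2 h5) h6
      have hlt0 : w₂ u * (-a^2*u^2 + P*u + Q) < 0 := mul_neg_of_pos_of_neg h2 hf
      rw [← h3] at hlt0
      linarith
  refine ⟨b, c, hbc, hsubset, ?_⟩
  filter_upwards [hrealae] with t ht hts
  have h3 := (ht hts).2.2
  rw [hkey t] at h3
  linear_combination h3

lemma WR_backward (x₀ x₁ : EReal) (w₁ w₂ : ℝ → ℝ) (a b c : ℝ) (ha : a ≠ 0) (hbc : b < c)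
    (haeq : ∀ᵐ x ∂volume, x ∈ ESet x₀ x₁ → w₁ x = a^2*w₂ x*(x-b)*(c-x)) :
    Reduces2 (ESet x₀ x₁) (W2 w₁ w₂ a) := by
  refine ⟨!![(1:ℂ), -((a:ℂ)*(c:ℂ)); -1, (a:ℂ)*(b:ℂ)], ?_, ?_⟩
  · rw [Matrix.isUnit_iff_isUnit_det, Matrix.det_fin_two_of]
    apply isUnit_iff_ne_zero.mpr
    have h : (1:ℂ) * ((a:ℂ)*(b:ℂ)) - (-((a:ℂ)*(c:ℂ))) * (-1) = (a:ℂ)*((b:ℂ)-(c:ℂ)) := by ring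
    rw [h]
    exact mul_ne_zero (by exact_mod_cast ha) (sub_ne_zero.mpr (by exact_mod_cast hbc.ne))
  · filter_upwards [haeq] with x hx hxS i j hij
    have heqC : (w₁ x : ℂ) = (a:ℂ)^2 * (w₂ x) * ((x:ℂ)-(b:ℂ)) * ((c:ℂ)-(x:ℂ)) := by
      exact_mod_cast hx hxS
    fin_cases i <;> fin_cases j <;>
      first
      | exact absurd rfl hij
      | · simp [W2, Matrix.mul_apply, Matrix.vecMul, dotProduct, Fin.sum_univ_two,
            Matrix.conjTranspose_apply, Matrix.map_apply, Complex.conj_ofReal]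
          ring_nf
          linear_combination -heqC

/-- The 2×2 weight `W` reduces to a direct sum of scalar weights if and only if
`w₁(x) = a² w₂(x) (x−b)(c−x)` a.e. on `(x₀,x₁)` for some `b < c` with
`(x₀,x₁) ⊆ (b,c)`. In particular, if `x₀ = −∞` or `x₁ = +∞`, then `W` is
irreducible. -/
theorem W2_reducible_iff
    (x₀ x₁ : EReal) (hlt : x₀ < x₁) (w₁ w₂ : ℝ → ℝ) (a : ℝ) (ha : a ≠ 0)
    (hmeas₁ : Measurable w₁) (hmeas₂ : Measurable w₂)
    (hpos₁ : ∀ᵐ x ∂volume, x ∈ ESet x₀ x₁ → 0 < w₁ x)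
    (hpos₂ : ∀ᵐ x ∂volume, x ∈ ESet x₀ x₁ → 0 < w₂ x)
    (hsupp₁ : ∀ x ∉ ESet x₀ x₁, w₁ x = 0)
    (hsupp₂ : ∀ x ∉ ESet x₀ x₁, w₂ x = 0)
    (hmom₁ : ∀ n : ℕ, Integrable (fun x => |x| ^ n * w₁ x))
    (hmom₂ : ∀ n : ℕ, Integrable (fun x => |x| ^ n * w₂ x)) :
    (Reduces2 (ESet x₀ x₁) (W2 w₁ w₂ a) ↔
      ∃ b c : ℝ, b < c ∧ ESet x₀ x₁ ⊆ Set.Ioo b c ∧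
        ∀ᵐ x ∂volume, x ∈ ESet x₀ x₁ →
          w₁ x = a ^ 2 * w₂ x * (x - b) * (c - x)) ∧
    ((x₀ = ⊥ ∨ x₁ = ⊤) → ¬ Reduces2 (ESet x₀ x₁) (W2 w₁ w₂ a)) := by
  have hfwd := WR_forward x₀ x₁ hlt w₁ w₂ a ha hpos₁ hpos₂
  constructor
  · constructor
    · exact hfwd
    · rintro ⟨b, c, hbc, hsub, haeq⟩
      exact WR_backward x₀ x₁ w₁ w₂ a b c ha hbc haeq
  · rintro (rfl | rfl) hred
    · obtain ⟨b, c, hbc, hsub, -⟩ := hfwd hred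
      obtain ⟨z, hz1, hz2⟩ := EReal.exists_between_coe_real hlt
      have hxS : (min b z - 1) ∈ ESet ⊥ x₁ := by
        refine ⟨EReal.bot_lt_coe _, lt_of_le_of_lt ?_ hz2⟩
        exact_mod_cast (by linarith [min_le_right b z] : min b z - 1 ≤ z)
      have hb := (hsub hxS).1
      have : min b z - 1 ≤ b - 1 := by linarith [min_le_left b z]
      linarith
    · obtain ⟨b, c, hbc, hsub, -⟩ := hfwd hred
      obtain ⟨z, hz1, hz2⟩ := EReal.exists_between_coe_real hlt
      have hxS : (max c z + 1) ∈ ESet x₀ ⊤ := by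
        refine ⟨lt_of_lt_of_le hz1 ?_, EReal.coe_lt_top _⟩
        exact_mod_cast (by linarith [le_max_right c z] : z ≤ max c z + 1)
      have hc := (hsub hxS).2
      have : c + 1 ≤ max c z + 1 := by linarith [le_max_left c z]
      linarith

end
end

section
/- Let w₁, w₂, w₃ be scalar weights on (x₀,x₁), let a₁, a₂ ∈ ℝ∖{0}, and let W(x) be the 3×3 matrix with entries W₁₁ = a₁²x²w₂(x) + w₁(x), W₁₂ = W₂₁ = a₁xw₂(x), W₁₃ = W₃₁ = a₁a₂x²w₂(x), W₂₂ = w₂(x), W₂₃ = W₃₂ = a₂xw₂(x), W₃₃ = a₂²x²w₂(x) + w₃(x). Assume: (i) there is no polynomial q of degree ≤ 2 with w₁(x) = q(x)w₂(x) for a.e. x ∈ (x₀,x₁); (ii) there is no polynomial q of degree ≤ 1 with w₃(x) = q(x)w₂(x) for a.e. x ∈ (x₀,x₁); (iii) there is no constant q with w₁(x) = q·w₃(x) for a.e. x ∈ (x₀,x₁). Then W is irreducible: there is no invertible M ∈ Mat₃(ℂ) and no splitting 3 = N₁ + N₂ with N₁, N₂ ≥ 1 such that M·W(x)·M* is block diagonal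 with diagonal blocks of sizes N₁ and N₂ for almost every x ∈ (x₀,x₁). (In particular, every constant matrix F ∈ Mat₃(ℂ) satisfying F·W(x) = W(x)·F* for a.e. x ∈ (x₀,x₁) is a scalar multiple of the identity.) -/
open MeasureTheory Matrix Polynomial

noncomputable section

/-- The 3×3 weight matrix of the setup (with scalar weights `w₁, w₂, w₃`). -/
def W3 (w₁ w₂ w₃ : ℝ → ℝ) (a₁ a₂ : ℝ) (x : ℝ) : Matrix (Fin 3) (Fin 3) ℝ :=
  !![a₁ ^ 2 * x ^ 2 * w₂ x + w₁ x, a₁ * x * w₂ x, a₁ * a₂ * x ^ 2 * w₂ x;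
     a₁ * x * w₂ x, w₂ x, a₂ * x * w₂ x;
     a₁ * a₂ * x ^ 2 * w₂ x, a₂ * x * w₂ x, a₂ ^ 2 * x ^ 2 * w₂ x + w₃ x]

/-- A complex quadratic vanishing on an infinite set of reals has zero coefficients. -/
lemma quad_zero' {u v w : ℂ} {S : Set ℝ} (hS : S.Infinite)
    (h : ∀ x ∈ S, u + v * (x:ℂ) + w * (x:ℂ)^2 = 0) : u = 0 ∧ v = 0 ∧ w = 0 := by
  set p : Polynomial ℂ := C w * X^2 + C v * X + C u with hp
  have hroots : {z : ℂ | p.IsRoot z}.Infinite := by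
    apply Set.Infinite.mono ?_ (hS.image (Set.injOn_of_injective Complex.ofReal_injective))
    rintro z ⟨x, hx, rfl⟩
    simp only [Set.mem_setOf_eq, IsRoot, hp, eval_add, eval_mul, eval_pow, eval_C, eval_X]
    linear_combination h x hx
  have h0 : p = 0 := p.eq_zero_of_infinite_isRoot hroots
  refine ⟨?_, ?_, ?_⟩
  · have := congrArg (fun q => Polynomial.coeff q 0) h0; simpa [hp] using this
  · have := congrArg (fun q => Polynomial.coeff q 1) h0; simpa [hp] using this
  · have := congrArg (fun q => Polynomial.coeff q 2) h0; simpa [hp] using this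

/-- Conjugation transfer: if `Wc = A D Aᴴ`, `B A = 1` and `F Wc = Wc Fᴴ`, then
`G = B F A` satisfies `G D = D Gᴴ`. -/
lemma conj_rel' {A B D Wc F : Matrix (Fin 3) (Fin 3) ℂ} (hBA : B * A = 1)
    (hW : Wc = A * D * Aᴴ) (hF : F * Wc = Wc * Fᴴ) :
    (B * F * A) * D = D * (B * F * A)ᴴ := by
  have hABH : Aᴴ * Bᴴ = 1 := by
    rw [← Matrix.conjTranspose_mul, hBA, Matrix.conjTranspose_one]
  have hAD : A * D = Wc * Bᴴ := by
    rw [hW, Matrix.mul_assoc, Matrix.mul_assoc, hABH, Matrix.mul_one]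
  simp only [Matrix.conjTranspose_mul, Matrix.mul_assoc]
  rw [hAD, ← Matrix.mul_assoc F Wc, hF, hW]
  simp only [Matrix.mul_assoc]
  rw [← Matrix.mul_assoc B A, hBA, Matrix.one_mul]

/-- The three scalar identities extracted from `F W(x) = W(x) Fᴴ`. -/
lemma W3_entry_eqs (w₁ w₂ w₃ : ℝ → ℝ) (a₁ a₂ x : ℝ) (F : Matrix (Fin 3) (Fin 3) ℂ)
    (hF : F * (W3 w₁ w₂ w₃ a₁ a₂ x).map (fun t => (t : ℂ)) =
      (W3 w₁ w₂ w₃ a₁ a₂ x).map (fun t => (t : ℂ)) * Fᴴ) :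
    ((F 0 1 + (x:ℂ) * ((a₁:ℂ) * F 0 0 + (a₂:ℂ) * F 0 2 - (a₁:ℂ) * F 1 1)
        - (x:ℂ)^2 * (a₁:ℂ) * ((a₁:ℂ) * F 1 0 + (a₂:ℂ) * F 1 2)) * (w₂ x : ℂ)
      = (w₁ x : ℂ) * (starRingEnd ℂ) (F 1 0)) ∧
    (F 1 2 * (w₃ x : ℂ)
      = (w₂ x : ℂ) * ((starRingEnd ℂ) (F 2 1)
          + (x:ℂ) * ((a₂:ℂ) * (starRingEnd ℂ) (F 2 2) + (a₁:ℂ) * (starRingEnd ℂ) (F 2 0)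
              - (a₂:ℂ) * (starRingEnd ℂ) (F 1 1))
          - (x:ℂ)^2 * (a₂:ℂ) * ((a₁:ℂ) * (starRingEnd ℂ) (F 1 0)
              + (a₂:ℂ) * (starRingEnd ℂ) (F 1 2)))) ∧
    ((F 0 2 - (a₁:ℂ) * (x:ℂ) * F 1 2) * (w₃ x : ℂ)
      = (w₁ x : ℂ) * ((starRingEnd ℂ) (F 2 0) - (a₂:ℂ) * (x:ℂ) * (starRingEnd ℂ) (F 1 0))) := by
  set A : Matrix (Fin 3) (Fin 3) ℂ := !![1, (a₁:ℂ) * x, 0; 0, 1, 0; 0, (a₂:ℂ) * x, 1] with hA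
  set B : Matrix (Fin 3) (Fin 3) ℂ := !![1, -((a₁:ℂ) * x), 0; 0, 1, 0; 0, -((a₂:ℂ) * x), 1] with hB
  set D : Matrix (Fin 3) (Fin 3) ℂ :=
    Matrix.diagonal ![(w₁ x : ℂ), (w₂ x : ℂ), (w₃ x : ℂ)] with hD
  have hBA : B * A = 1 := by
    ext i j
    fin_cases i <;> fin_cases j <;>
      simp only [hA, hB, Matrix.mul_apply, Fin.sum_univ_three, Matrix.cons_val_zero,
        Matrix.cons_val_one, Matrix.cons_val_two, Matrix.head_cons, Matrix.tail_cons,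
        Matrix.cons_val', Matrix.empty_val', Matrix.cons_val_fin_one, Matrix.one_apply,
        Matrix.of_apply, Fin.isValue] <;> norm_num [Fin.ext_iff]
  have hW : (W3 w₁ w₂ w₃ a₁ a₂ x).map (fun t => (t : ℂ)) = A * D * Aᴴ := by
    ext i j
    fin_cases i <;> fin_cases j <;>
      simp only [hA, hD, W3, Matrix.mul_apply, Fin.sum_univ_three, Matrix.conjTranspose_apply,
        Matrix.diagonal_apply, Matrix.map_apply, Matrix.cons_val_zero, Matrix.cons_val_one,
        Matrix.cons_val_two, Matrix.head_cons, Matrix.tail_cons, Matrix.cons_val',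
        Matrix.empty_val', Matrix.cons_val_fin_one, Matrix.of_apply, Fin.isValue,
        star_one, star_zero, star_mul', star_add, star_neg, Complex.star_def,
        Complex.conj_ofReal] <;> norm_num [Fin.ext_iff] <;> push_cast <;> ring
  have key := conj_rel' hBA hW hF
  have e01 : ((B * F * A) * D) 0 1 = (D * (B * F * A)ᴴ) 0 1 := by rw [key]
  have e12 : ((B * F * A) * D) 1 2 = (D * (B * F * A)ᴴ) 1 2 := by rw [key]
  have e02 : ((B * F * A) * D) 0 2 = (D * (B * F * A)ᴴ) 0 2 := by rw [key]
  simp only [hA, hB, hD, Matrix.mul_apply, Fin.sum_univ_three, Matrix.conjTranspose_apply,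
    Matrix.diagonal_apply, Matrix.cons_val_zero, Matrix.cons_val_one, Matrix.cons_val_two,
    Matrix.head_cons, Matrix.tail_cons, Matrix.of_apply, Matrix.cons_val', Matrix.empty_val',
    Matrix.cons_val_fin_one, Fin.isValue, star_one, star_zero, star_mul', star_add, star_neg,
    Complex.star_def, Complex.conj_ofReal, map_zero] at e01 e12 e02
  norm_num [Fin.ext_iff] at e01 e12 e02
  refine ⟨by linear_combination e01, by linear_combination e12, by linear_combination e02⟩

/-- A property holding a.e. on a nonempty open interval holds on an infinite set. -/
lemma ae_inter_infinite {x₀ x₁ : ℝ} (h : x₀ < x₁) {P : ℝ → Prop}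
    (hP : ∀ᵐ x ∂volume, x ∈ Set.Ioo x₀ x₁ → P x) :
    {x | x ∈ Set.Ioo x₀ x₁ ∧ P x}.Infinite := by
  have h1 : volume {x | x ∈ Set.Ioo x₀ x₁ ∧ P x} = volume (Set.Ioo x₀ x₁) := by
    have he : {x | x ∈ Set.Ioo x₀ x₁ ∧ P x} =
        Set.Ioo x₀ x₁ ∩ {x | x ∈ Set.Ioo x₀ x₁ → P x} := by
      ext y; simp only [Set.mem_setOf_eq, Set.mem_inter_iff]; tauto
    rw [he]
    refine measure_inter_conull ?_
    rw [Set.compl_setOf]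
    exact ae_iff.mp hP
  have h2 : volume (Set.Ioo x₀ x₁) ≠ 0 := by
    rw [Real.volume_Ioo]
    simp only [ne_eq, ENNReal.ofReal_eq_zero, not_le]
    linarith
  intro hfin
  exact h2 (h1 ▸ hfin.measure_zero volume)

/-- Real part extraction for the quotient identities. -/
lemma complex_re_eq {c0 c1 c2 k : ℂ} {x W1 W2 : ℝ} (hk : k ≠ 0)
    (h : (c0 + (x:ℂ) * c1 - (x:ℂ)^2 * c2) * (W2:ℂ) = (W1:ℂ) * k) :
    W1 = ((c0/k).re + (c1/k).re * x - (c2/k).re * x^2) * W2 := by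
  have h5 : (W2:ℂ) * (c0/k + (c1/k) * (x:ℂ) - (c2/k) * ((x:ℂ))^2) = (W1:ℂ) := by
    field_simp
    linear_combination h
  have h6 := congrArg Complex.re h5
  simp only [Complex.re_ofReal_mul, Complex.add_re, Complex.sub_re, Complex.mul_re,
    Complex.ofReal_re, Complex.ofReal_im, ← Complex.ofReal_pow, mul_zero, sub_zero] at h6
  rw [← h6]; ring

/-- Under the non-proportionality assumptions (i)–(iii) on the scalar weights, the
3×3 weight `W` is irreducible: no invertible `M ∈ Mat₃(ℂ)` makes `M W(x) M*`
block diagonal (with two blocks of sizes `N₁, N₂ ≥ 1`) almost everywhere; in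
particular every constant `F` with `F W = W F*` a.e. is a scalar multiple of the
identity. -/
theorem W3_irreducible
    (x₀ x₁ : ℝ) (w₁ w₂ w₃ : ℝ → ℝ) (a₁ a₂ : ℝ) (ha₁ : a₁ ≠ 0) (ha₂ : a₂ ≠ 0)
    (hmeas₁ : Measurable w₁) (hmeas₂ : Measurable w₂) (hmeas₃ : Measurable w₃)
    (hpos₁ : ∀ᵐ x ∂volume, x ∈ Set.Ioo x₀ x₁ → 0 < w₁ x)
    (hpos₂ : ∀ᵐ x ∂volume, x ∈ Set.Ioo x₀ x₁ → 0 < w₂ x)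
    (hpos₃ : ∀ᵐ x ∂volume, x ∈ Set.Ioo x₀ x₁ → 0 < w₃ x)
    (hsupp₁ : ∀ x ∉ Set.Ioo x₀ x₁, w₁ x = 0)
    (hsupp₂ : ∀ x ∉ Set.Ioo x₀ x₁, w₂ x = 0)
    (hsupp₃ : ∀ x ∉ Set.Ioo x₀ x₁, w₃ x = 0)
    (hmom₁ : ∀ n : ℕ, Integrable (fun x => |x| ^ n * w₁ x))
    (hmom₂ : ∀ n : ℕ, Integrable (fun x => |x| ^ n * w₂ x))
    (hmom₃ : ∀ n : ℕ, Integrable (fun x => |x| ^ n * w₃ x))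
    (h₁ : ¬ ∃ q : Polynomial ℝ, q.degree ≤ 2 ∧
      ∀ᵐ x ∂volume, x ∈ Set.Ioo x₀ x₁ → w₁ x = q.eval x * w₂ x)
    (h₂ : ¬ ∃ q : Polynomial ℝ, q.degree ≤ 1 ∧
      ∀ᵐ x ∂volume, x ∈ Set.Ioo x₀ x₁ → w₃ x = q.eval x * w₂ x)
    (h₃ : ¬ ∃ q : ℝ, ∀ᵐ x ∂volume, x ∈ Set.Ioo x₀ x₁ → w₁ x = q * w₃ x) :
    (¬ ∃ (M : Matrix (Fin 3) (Fin 3) ℂ) (N₁ N₂ : ℕ),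
        IsUnit M ∧ 1 ≤ N₁ ∧ 1 ≤ N₂ ∧ N₁ + N₂ = 3 ∧
        ∀ᵐ x ∂volume, x ∈ Set.Ioo x₀ x₁ → ∀ i j : Fin 3,
          ((i.val < N₁ ∧ ¬ j.val < N₁) ∨ (¬ i.val < N₁ ∧ j.val < N₁)) →
          (M * (W3 w₁ w₂ w₃ a₁ a₂ x).map (fun t => (t : ℂ)) * Mᴴ) i j = 0) ∧
    (∀ F : Matrix (Fin 3) (Fin 3) ℂ,
      (∀ᵐ x ∂volume, x ∈ Set.Ioo x₀ x₁ →
        F * (W3 w₁ w₂ w₃ a₁ a₂ x).map (fun t => (t : ℂ)) =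
          (W3 w₁ w₂ w₃ a₁ a₂ x).map (fun t => (t : ℂ)) * Fᴴ) →
      ∃ c : ℂ, F = c • (1 : Matrix (Fin 3) (Fin 3) ℂ)) := by
  -- the interval is nonempty, otherwise `h₁` fails trivially
  have hx01 : x₀ < x₁ := by
    by_contra hlt
    refine h₁ ⟨0, by rw [Polynomial.degree_zero]; exact bot_le, ?_⟩
    filter_upwards with x hx
    exact absurd hx (by rw [Set.Ioo_eq_empty hlt]; exact Set.notMem_empty x)
  have ha₁c : (a₁ : ℂ) ≠ 0 := by exact_mod_cast ha₁
  have ha₂c : (a₂ : ℂ) ≠ 0 := by exact_mod_cast ha₂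
  -- ===== Part 2: the commutant computation =====
  have key : ∀ F : Matrix (Fin 3) (Fin 3) ℂ,
      (∀ᵐ x ∂volume, x ∈ Set.Ioo x₀ x₁ →
        F * (W3 w₁ w₂ w₃ a₁ a₂ x).map (fun t => (t : ℂ)) =
          (W3 w₁ w₂ w₃ a₁ a₂ x).map (fun t => (t : ℂ)) * Fᴴ) →
      ∃ c : ℂ, F = c • (1 : Matrix (Fin 3) (Fin 3) ℂ) := by
    intro F hFae
    have haeP : ∀ᵐ x ∂volume, x ∈ Set.Ioo x₀ x₁ →
        (0 < w₁ x ∧ 0 < w₂ x ∧ 0 < w₃ x ∧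
          F * (W3 w₁ w₂ w₃ a₁ a₂ x).map (fun t => (t : ℂ)) =
            (W3 w₁ w₂ w₃ a₁ a₂ x).map (fun t => (t : ℂ)) * Fᴴ) := by
      filter_upwards [hpos₁, hpos₂, hpos₃, hFae] with x p1 p2 p3 pF hx
      exact ⟨p1 hx, p2 hx, p3 hx, pF hx⟩
    have hS : {x | x ∈ Set.Ioo x₀ x₁ ∧
        (0 < w₁ x ∧ 0 < w₂ x ∧ 0 < w₃ x ∧
          F * (W3 w₁ w₂ w₃ a₁ a₂ x).map (fun t => (t : ℂ)) =
            (W3 w₁ w₂ w₃ a₁ a₂ x).map (fun t => (t : ℂ)) * Fᴴ)}.Infinite :=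
      ae_inter_infinite hx01 haeP
    set c1 : ℂ := (a₁:ℂ) * F 0 0 + (a₂:ℂ) * F 0 2 - (a₁:ℂ) * F 1 1 with hc1def
    set c2 : ℂ := (a₁:ℂ) * ((a₁:ℂ) * F 1 0 + (a₂:ℂ) * F 1 2) with hc2def
    -- Step 1: F 1 0 = 0 (else w₁ would be a quadratic multiple of w₂)
    have h10 : F 1 0 = 0 := by
      by_contra h10
      have hk : (starRingEnd ℂ) (F 1 0) ≠ 0 :=
        fun h => h10 (by simpa using congrArg (starRingEnd ℂ) h)
      set k : ℂ := (starRingEnd ℂ) (F 1 0) with hkdef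
      refine h₁ ⟨Polynomial.C (-((c2/k).re)) * Polynomial.X^2 +
        Polynomial.C ((c1/k).re) * Polynomial.X + Polynomial.C ((F 0 1/k).re),
        Polynomial.degree_quadratic_le, ?_⟩
      filter_upwards [haeP] with x hx hmem
      obtain ⟨p1, p2, p3, pF⟩ := hx hmem
      obtain ⟨e01x, -, -⟩ := W3_entry_eqs w₁ w₂ w₃ a₁ a₂ x F pF
      have e01' : (F 0 1 + (x:ℂ) * c1 - (x:ℂ)^2 * c2) * (w₂ x : ℂ) = (w₁ x : ℂ) * k := by
        rw [hc1def, hc2def, hkdef]; linear_combination e01x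
      have hre := complex_re_eq hk e01'
      rw [hre]
      simp only [Polynomial.eval_add, Polynomial.eval_mul, Polynomial.eval_pow,
        Polynomial.eval_C, Polynomial.eval_X]
      ring
    have hc10 : (starRingEnd ℂ) (F 1 0) = 0 := by rw [h10, map_zero]
    -- Step 2: row `0`/entry `12` coefficients vanish
    have hquad : ∀ x ∈ {x | x ∈ Set.Ioo x₀ x₁ ∧
        (0 < w₁ x ∧ 0 < w₂ x ∧ 0 < w₃ x ∧
          F * (W3 w₁ w₂ w₃ a₁ a₂ x).map (fun t => (t : ℂ)) =
            (W3 w₁ w₂ w₃ a₁ a₂ x).map (fun t => (t : ℂ)) * Fᴴ)},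
        F 0 1 + c1 * (x:ℂ) + (-c2) * (x:ℂ)^2 = 0 := by
      rintro x ⟨hmem, p1, p2, p3, pF⟩
      obtain ⟨e01x, -, -⟩ := W3_entry_eqs w₁ w₂ w₃ a₁ a₂ x F pF
      have hw2 : (w₂ x : ℂ) ≠ 0 := by exact_mod_cast ne_of_gt p2
      rw [hc10, mul_zero] at e01x
      have h0' := (mul_eq_zero.mp e01x).resolve_right hw2
      rw [hc1def, hc2def]; linear_combination h0'
    obtain ⟨h01, hc1, hc2⟩ := quad_zero' hS hquad
    have h12 : F 1 2 = 0 := by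
      have h'' : (a₁:ℂ) * ((a₂:ℂ) * F 1 2) = 0 := by
        rw [hc2def] at hc2
        linear_combination -hc2 - (a₁:ℂ)^2 * h10
      exact (mul_eq_zero.mp ((mul_eq_zero.mp h'').resolve_left ha₁c)).resolve_left ha₂c
    -- Step 3: entry `21` coefficients vanish
    set d1 : ℂ := (a₂:ℂ) * (starRingEnd ℂ) (F 2 2) + (a₁:ℂ) * (starRingEnd ℂ) (F 2 0)
        - (a₂:ℂ) * (starRingEnd ℂ) (F 1 1) with hd1def
    set d2 : ℂ := (a₂:ℂ) * ((a₁:ℂ) * (starRingEnd ℂ) (F 1 0)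
        + (a₂:ℂ) * (starRingEnd ℂ) (F 1 2)) with hd2def
    have hquad3 : ∀ x ∈ {x | x ∈ Set.Ioo x₀ x₁ ∧
        (0 < w₁ x ∧ 0 < w₂ x ∧ 0 < w₃ x ∧
          F * (W3 w₁ w₂ w₃ a₁ a₂ x).map (fun t => (t : ℂ)) =
            (W3 w₁ w₂ w₃ a₁ a₂ x).map (fun t => (t : ℂ)) * Fᴴ)},
        (starRingEnd ℂ) (F 2 1) + d1 * (x:ℂ) + (-d2) * (x:ℂ)^2 = 0 := by
      rintro x ⟨hmem, p1, p2, p3, pF⟩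
      obtain ⟨-, e12x, -⟩ := W3_entry_eqs w₁ w₂ w₃ a₁ a₂ x F pF
      have hw2 : (w₂ x : ℂ) ≠ 0 := by exact_mod_cast ne_of_gt p2
      rw [h12, zero_mul] at e12x
      simp only [map_zero] at e12x
      have h0' := (mul_eq_zero.mp e12x.symm).resolve_left hw2
      have hc12 : (starRingEnd ℂ) (F 1 2) = 0 := by rw [h12, map_zero]
      rw [hd1def, hd2def]
      linear_combination h0' - (x:ℂ)^2 * (a₂:ℂ)^2 * hc12
    obtain ⟨h21c, hd1, -⟩ := quad_zero' hS hquad3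
    have h21 : F 2 1 = 0 := by
      simpa using congrArg (starRingEnd ℂ) h21c
    -- Step 4: F 2 0 = 0 and F 0 2 = 0
    have h20 : F 2 0 = 0 := by
      by_contra h20
      have hk2 : (starRingEnd ℂ) (F 2 0) ≠ 0 :=
        fun h => h20 (by simpa using congrArg (starRingEnd ℂ) h)
      refine h₃ ⟨(F 0 2 / (starRingEnd ℂ) (F 2 0)).re, ?_⟩
      filter_upwards [haeP] with x hx hmem
      obtain ⟨p1, p2, p3, pF⟩ := hx hmem
      obtain ⟨-, -, e02x⟩ := W3_entry_eqs w₁ w₂ w₃ a₁ a₂ x F pF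
      rw [h12, hc10] at e02x
      have e02' : (F 0 2 + (x:ℂ) * 0 - (x:ℂ)^2 * 0) * (w₃ x : ℂ)
          = (w₁ x : ℂ) * (starRingEnd ℂ) (F 2 0) := by linear_combination e02x
      have hre := complex_re_eq hk2 e02'
      rw [hre]
      simp only [zero_div, Complex.zero_re]
      ring
    have h02 : F 0 2 = 0 := by
      obtain ⟨x, hmem, p1, p2, p3, pF⟩ := hS.nonempty
      obtain ⟨-, -, e02x⟩ := W3_entry_eqs w₁ w₂ w₃ a₁ a₂ x F pF
      have hw3 : (w₃ x : ℂ) ≠ 0 := by exact_mod_cast ne_of_gt p3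
      rw [h12, h20, hc10, map_zero] at e02x
      have h0 : F 0 2 * (w₃ x : ℂ) = 0 := by linear_combination e02x
      exact (mul_eq_zero.mp h0).resolve_right hw3
    -- Step 5: diagonal entries agree
    have h00 : F 0 0 = F 1 1 := by
      rw [hc1def] at hc1
      have h' : (a₁:ℂ) * (F 0 0 - F 1 1) = 0 := by
        linear_combination hc1 - (a₂:ℂ) * h02
      exact sub_eq_zero.mp ((mul_eq_zero.mp h').resolve_left ha₁c)
    have h22 : F 2 2 = F 1 1 := by
      rw [hd1def] at hd1
      have hc20 : (starRingEnd ℂ) (F 2 0) = 0 := by rw [h20, map_zero]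
      have h' : (a₂:ℂ) * ((starRingEnd ℂ) (F 2 2) - (starRingEnd ℂ) (F 1 1)) = 0 := by
        linear_combination hd1 - (a₁:ℂ) * hc20
      have h'' := sub_eq_zero.mp ((mul_eq_zero.mp h').resolve_left ha₂c)
      have := congrArg (starRingEnd ℂ) h''
      simpa using this
    refine ⟨F 1 1, ?_⟩
    ext i j
    fin_cases i <;> fin_cases j <;>
      simp [Matrix.smul_apply, Matrix.one_apply, Fin.ext_iff, h01, h10, h12, h21, h20, h02,
        h00, h22]
  refine ⟨?_, key⟩
  rintro ⟨M, N₁, N₂, hM, hN₁, hN₂, hsum, hblock⟩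
  have hdet : IsUnit M.det := (Matrix.isUnit_iff_isUnit_det M).mp hM
  have hdetH : IsUnit Mᴴ.det := by rw [Matrix.det_conjTranspose]; exact hdet.star
  set E : Matrix (Fin 3) (Fin 3) ℂ :=
    Matrix.diagonal (fun i : Fin 3 => if (i : ℕ) < N₁ then 1 else 0) with hE
  have hEH : Eᴴ = E := by
    ext i j
    by_cases h : i = j
    · subst h
      by_cases hi : (i : ℕ) < N₁ <;>
        simp [hE, Matrix.conjTranspose_apply, Matrix.diagonal_apply, hi]
    · simp [hE, Matrix.conjTranspose_apply, Matrix.diagonal_apply, h, Ne.symm h]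
  have hcancel : ∀ P : Matrix (Fin 3) (Fin 3) ℂ, M⁻¹ * (M * P * Mᴴ) * Mᴴ⁻¹ = P := by
    intro P
    simp only [Matrix.mul_assoc]
    rw [Matrix.mul_nonsing_inv Mᴴ hdetH, Matrix.mul_one, ← Matrix.mul_assoc,
      Matrix.nonsing_inv_mul M hdet, Matrix.one_mul]
  have hcancel2 : ∀ P : Matrix (Fin 3) (Fin 3) ℂ, M * (M⁻¹ * P * M) * M⁻¹ = P := by
    intro P
    simp only [Matrix.mul_assoc]
    rw [Matrix.mul_nonsing_inv M hdet, Matrix.mul_one, ← Matrix.mul_assoc,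
      Matrix.mul_nonsing_inv M hdet, Matrix.one_mul]
  have hinj : ∀ P Q : Matrix (Fin 3) (Fin 3) ℂ, M * P * Mᴴ = M * Q * Mᴴ → P = Q := by
    intro P Q h
    rw [← hcancel P, h, hcancel Q]
  have hFW : ∀ᵐ x ∂volume, x ∈ Set.Ioo x₀ x₁ →
      (M⁻¹ * E * M) * (W3 w₁ w₂ w₃ a₁ a₂ x).map (fun t => (t : ℂ)) =
        (W3 w₁ w₂ w₃ a₁ a₂ x).map (fun t => (t : ℂ)) * (M⁻¹ * E * M)ᴴ := by
    filter_upwards [hblock] with x hb hx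
    set Wc : Matrix (Fin 3) (Fin 3) ℂ := (W3 w₁ w₂ w₃ a₁ a₂ x).map (fun t => (t : ℂ)) with hWc
    have hEX : E * (M * Wc * Mᴴ) = (M * Wc * Mᴴ) * E := by
      ext i j
      rw [hE, Matrix.diagonal_mul, Matrix.mul_diagonal]
      by_cases hi : (i : ℕ) < N₁ <;> by_cases hj : (j : ℕ) < N₁
      · simp [hi, hj]
      · simp only [hi, hj, if_true, if_false, one_mul, mul_zero]
        exact hb hx i j (Or.inl ⟨hi, hj⟩)
      · simp only [hi, hj, if_true, if_false, zero_mul, mul_one]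
        exact (hb hx i j (Or.inr ⟨hi, hj⟩)).symm
      · simp [hi, hj]
    have hFH : (M⁻¹ * E * M)ᴴ = Mᴴ * (E * Mᴴ⁻¹) := by
      rw [Matrix.conjTranspose_mul, Matrix.conjTranspose_mul, hEH,
        Matrix.conjTranspose_nonsing_inv]
    refine hinj _ _ ?_
    have lhs : M * ((M⁻¹ * E * M) * Wc) * Mᴴ = E * (M * Wc * Mᴴ) := by
      simp only [Matrix.mul_assoc]
      rw [← Matrix.mul_assoc M M⁻¹, Matrix.mul_nonsing_inv M hdet, Matrix.one_mul]
    have rhs : M * (Wc * (M⁻¹ * E * M)ᴴ) * Mᴴ = (M * Wc * Mᴴ) * E := by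
      rw [hFH]
      simp only [Matrix.mul_assoc]
      rw [Matrix.nonsing_inv_mul Mᴴ hdetH, Matrix.mul_one]
    rw [lhs, rhs, hEX]
  obtain ⟨c, hc⟩ := key (M⁻¹ * E * M) hFW
  have hEc : E = c • (1 : Matrix (Fin 3) (Fin 3) ℂ) := by
    calc E = M * (M⁻¹ * E * M) * M⁻¹ := (hcancel2 E).symm
      _ = M * (c • (1 : Matrix (Fin 3) (Fin 3) ℂ)) * M⁻¹ := by rw [hc]
      _ = c • (M * M⁻¹) := by
          rw [Matrix.mul_smul, Matrix.smul_mul, Matrix.mul_one]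
      _ = c • (1 : Matrix (Fin 3) (Fin 3) ℂ) := by rw [Matrix.mul_nonsing_inv M hdet]
  have h0N : (0 : ℕ) < N₁ := hN₁
  have h2N : ¬ ((2 : ℕ) < N₁) := by omega
  have hc1 : (1 : ℂ) = c := by
    have := congrArg (fun Z : Matrix (Fin 3) (Fin 3) ℂ => Z 0 0) hEc
    simpa [hE, Matrix.diagonal_apply, Matrix.smul_apply, Matrix.one_apply, h0N] using this
  have hc0 : (0 : ℂ) = c := by
    have := congrArg (fun Z : Matrix (Fin 3) (Fin 3) ℂ => Z 2 2) hEc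
    simpa [hE, Matrix.diagonal_apply, Matrix.smul_apply, Matrix.one_apply, h2N] using this
  exact one_ne_zero (hc1.trans hc0.symm)

end
end

section
/- Let w₁, w₂ be scalar weights on (x₀,x₁), let a₁, a₂ ∈ ℝ∖{0}, and let W(x) be the 3×3 matrix with entries W₁₁ = a₁²x²w₂(x) + w₁(x), W₁₂ = W₂₁ = a₁xw₂(x), W₁₃ = W₃₁ = a₁a₂x²w₂(x), W₂₂ = w₂(x), W₂₃ = W₃₂ = a₂xw₂(x), W₃₃ = a₂²x²w₂(x) + w₁(x) (this is the weight of the setup with w₃ = w₁). Set s = a₁² + a₂² and M = [[1, 0, −a₁/a₂], [0, 1, 0], [a₁a₂/s, 0, a₂²/s]]. Then M is invertible and for every x: M·W(x)·Mᵀ = [[(s/a₂²)·w₁(x), 0, 0], [0, w₂(x), a₂xw₂(x)], [0, a₂xw₂(x), a₂²x²w₂(x) + (a₂²/s)·w₁(x)]]. In particular W reduces to the direct sum of the scalar weight (s/a₂²)·w₁ and a 2×2 weight matrix. -/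
/-!
W(x) = w₁(x)·diag(1, 0, 1) + w₂(x)·v vᵀ with v = (a₁x, 1, a₂x). The matrix M sends v to
(0, 1, a₂x), and its first and third rows are orthogonal for the form diag(1, 0, 1), so
conjugating by M turns the rank-one part into the 2×2 block and the diagonal part into
diag(s/a₂², 0, a₂²/s).
-/

open MeasureTheory Matrix

noncomputable section

/-- The 3×3 weight matrix of the setup with `w₃ = w₁`. -/
def W3' (w₁ w₂ : ℝ → ℝ) (a₁ a₂ : ℝ) (x : ℝ) : Matrix (Fin 3) (Fin 3) ℝ :=
  !![a₁ ^ 2 * x ^ 2 * w₂ x + w₁ x, a₁ * x * w₂ x, a₁ * a₂ * x ^ 2 * w₂ x;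
     a₁ * x * w₂ x, w₂ x, a₂ * x * w₂ x;
     a₁ * a₂ * x ^ 2 * w₂ x, a₂ * x * w₂ x, a₂ ^ 2 * x ^ 2 * w₂ x + w₁ x]

/-- The reducing matrix `M` (with `s = a₁² + a₂²`). -/
def M3 (a₁ a₂ : ℝ) : Matrix (Fin 3) (Fin 3) ℝ :=
  !![1, 0, -(a₁ / a₂);
     0, 1, 0;
     a₁ * a₂ / (a₁ ^ 2 + a₂ ^ 2), 0, a₂ ^ 2 / (a₁ ^ 2 + a₂ ^ 2)]

theorem Matrix.mul_vecMulVec_mul_transpose {l m n α : Type*} [Fintype m] [CommSemiring α]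
    (A : Matrix l m α) (B : Matrix n m α) (u v : m → α) :
    A * vecMulVec u v * Bᵀ = vecMulVec (A *ᵥ u) (B *ᵥ v) := by
  rw [mul_vecMulVec, vecMulVec_mul, vecMul_transpose]

theorem W3'_eq_smul_diagonal_add_smul_vecMulVec (w₁ w₂ : ℝ → ℝ) (a₁ a₂ x : ℝ) :
    W3' w₁ w₂ a₁ a₂ x = w₁ x • diagonal ![1, 0, 1] +
      w₂ x • vecMulVec ![a₁ * x, 1, a₂ * x] ![a₁ * x, 1, a₂ * x] := by
  ext i j
  fin_cases i <;> fin_cases j <;> simp [W3'] <;> ring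

section

variable {a₁ a₂ : ℝ}

theorem det_M3 (ha₂ : a₂ ≠ 0) : (M3 a₁ a₂).det = 1 := by
  have hs : a₁ ^ 2 + a₂ ^ 2 ≠ 0 := by positivity
  simp [M3, det_fin_three]
  field_simp
  ring

theorem M3_mulVec (ha₂ : a₂ ≠ 0) (x : ℝ) :
    M3 a₁ a₂ *ᵥ ![a₁ * x, 1, a₂ * x] = ![0, 1, a₂ * x] := by
  have hs : a₁ ^ 2 + a₂ ^ 2 ≠ 0 := by positivity
  ext i
  fin_cases i <;> simp [M3, mulVec, dotProduct, Fin.sum_univ_three]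
  · field_simp
    ring
  · field_simp

theorem M3_mul_diagonal_mul_transpose (ha₂ : a₂ ≠ 0) :
    M3 a₁ a₂ * diagonal ![1, 0, 1] * (M3 a₁ a₂)ᵀ =
      diagonal ![(a₁ ^ 2 + a₂ ^ 2) / a₂ ^ 2, 0, a₂ ^ 2 / (a₁ ^ 2 + a₂ ^ 2)] := by
  have hs : a₁ ^ 2 + a₂ ^ 2 ≠ 0 := by positivity
  ext i j
  fin_cases i <;> fin_cases j <;>
    simp [M3, mul_apply, Fin.sum_univ_three, vecMul_diagonal] <;> field_simp <;> ring

end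

theorem W3'_reduces_general
    (w₁ w₂ : ℝ → ℝ) (a₁ a₂ : ℝ) (ha₂ : a₂ ≠ 0) :
    IsUnit (M3 a₁ a₂) ∧
    ∀ x : ℝ,
      M3 a₁ a₂ * W3' w₁ w₂ a₁ a₂ x * (M3 a₁ a₂)ᵀ =
        !![((a₁ ^ 2 + a₂ ^ 2) / a₂ ^ 2) * w₁ x, 0, 0;
           0, w₂ x, a₂ * x * w₂ x;
           0, a₂ * x * w₂ x,
             a₂ ^ 2 * x ^ 2 * w₂ x + (a₂ ^ 2 / (a₁ ^ 2 + a₂ ^ 2)) * w₁ x] := by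
  refine ⟨(isUnit_iff_isUnit_det _).2 (det_M3 ha₂ ▸ isUnit_one), fun x => ?_⟩
  rw [W3'_eq_smul_diagonal_add_smul_vecMulVec, Matrix.mul_add, Matrix.add_mul,
    Matrix.mul_smul, Matrix.smul_mul, Matrix.mul_smul, Matrix.smul_mul,
    M3_mul_diagonal_mul_transpose ha₂, mul_vecMulVec_mul_transpose, M3_mulVec ha₂]
  ext i j
  fin_cases i <;> fin_cases j <;> simp <;> ring

/-- If `w₃ = w₁`, then the 3×3 weight of the setup reduces: the explicit invertible
matrix `M` satisfies `M W(x) Mᵀ = ((s/a₂²) w₁(x)) ⊕ (2×2 block)` for every `x`,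
where `s = a₁² + a₂²`. -/
theorem W3'_reduces
    (x₀ x₁ : ℝ) (w₁ w₂ : ℝ → ℝ) (a₁ a₂ : ℝ) (ha₁ : a₁ ≠ 0) (ha₂ : a₂ ≠ 0)
    (hmeas₁ : Measurable w₁) (hmeas₂ : Measurable w₂)
    (hpos₁ : ∀ᵐ x ∂volume, x ∈ Set.Ioo x₀ x₁ → 0 < w₁ x)
    (hpos₂ : ∀ᵐ x ∂volume, x ∈ Set.Ioo x₀ x₁ → 0 < w₂ x)
    (hsupp₁ : ∀ x ∉ Set.Ioo x₀ x₁, w₁ x = 0)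
    (hsupp₂ : ∀ x ∉ Set.Ioo x₀ x₁, w₂ x = 0)
    (hmom₁ : ∀ n : ℕ, Integrable (fun x => |x| ^ n * w₁ x))
    (hmom₂ : ∀ n : ℕ, Integrable (fun x => |x| ^ n * w₂ x)) :
    IsUnit (M3 a₁ a₂) ∧
    ∀ x : ℝ,
      M3 a₁ a₂ * W3' w₁ w₂ a₁ a₂ x * (M3 a₁ a₂)ᵀ =
        !![((a₁ ^ 2 + a₂ ^ 2) / a₂ ^ 2) * w₁ x, 0, 0;
           0, w₂ x, a₂ * x * w₂ x;
           0, a₂ * x * w₂ x,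
             a₂ ^ 2 * x ^ 2 * w₂ x + (a₂ ^ 2 / (a₁ ^ 2 + a₂ ^ 2)) * w₁ x] :=
  W3'_reduces_general w₁ w₂ a₁ a₂ ha₂

end
end

section
/- Let N ≥ 2 and a₁,…,a_{N−1}, b₁,…,b_{N−1} ∈ ℝ. Let K be the N×N tridiagonal matrix with K_{i,i} = 1 for all i, K_{i,i+1} = aᵢ for i odd and K_{i,i+1} = bᵢ for i even, K_{i+1,i} = bᵢ for i odd and K_{i+1,i} = aᵢ for i even (so K_{i,i+1}·K_{i+1,i} = aᵢbᵢ for every 1 ≤ i ≤ N−1), and all other entries 0. Set ρᵢ = −aᵢbᵢ. Then det(K) = Σ_S Π_{i∈S} ρᵢ, where the sum runs over all subsets S ⊆ {1,…,N−1} containing no two consecutive integers (the empty set contributing 1). In particular, if aᵢbᵢ ≤ 0 for all i (so ρᵢ ≥ 0), then det(K) ≥ 1 > 0 and K is invertible. -/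
open Matrix Finset

noncomputable section

/-- The `N×N` tridiagonal matrix with `1` on the diagonal, superdiagonal entries
`K_{i,i+1} = aᵢ` for `i` odd and `bᵢ` for `i` even, and subdiagonal entries
`K_{i+1,i} = bᵢ` for `i` odd and `aᵢ` for `i` even (1-based indices `i`, realized
here with 0-based `Fin N` indices, so 1-based `i` odd ↔ 0-based row even). -/
def triK (N : ℕ) (a b : ℕ → ℝ) : Matrix (Fin N) (Fin N) ℝ :=
  Matrix.of fun i j =>
    if i = j then 1
    else if j.val = i.val + 1 then
      (if i.val % 2 = 0 then a (i.val + 1) else b (i.val + 1))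
    else if i.val = j.val + 1 then
      (if j.val % 2 = 0 then b (j.val + 1) else a (j.val + 1))
    else 0

lemma triK_apply (N : ℕ) (a b : ℕ → ℝ) (i j : Fin N) :
    triK N a b i j =
      if (i : ℕ) = (j : ℕ) then 1
      else if (j : ℕ) = (i : ℕ) + 1 then
        (if (i : ℕ) % 2 = 0 then a ((i : ℕ) + 1) else b ((i : ℕ) + 1))
      else if (i : ℕ) = (j : ℕ) + 1 then
        (if (j : ℕ) % 2 = 0 then b ((j : ℕ) + 1) else a ((j : ℕ) + 1))
      else 0 := by
  simp [triK, Fin.ext_iff]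

lemma triK_eq_of_val {N M : ℕ} (a b : ℕ → ℝ) {i j : Fin N} {p q : Fin M}
    (hi : (i : ℕ) = (p : ℕ)) (hj : (j : ℕ) = (q : ℕ)) :
    triK N a b i j = triK M a b p q := by
  rw [triK_apply, triK_apply, hi, hj]

lemma triK_det_rec (a b : ℕ → ℝ) (n : ℕ) :
    (triK (n+2) a b).det =
      (triK (n+1) a b).det - a (n+1) * b (n+1) * (triK n a b).det := by
  rw [Matrix.det_succ_row _ (Fin.last (n+1)), Fin.sum_univ_castSucc, Fin.sum_univ_castSucc]
  have hz : (∑ j : Fin n, (-1:ℝ) ^ ((Fin.last (n+1) : ℕ) + ((j.castSucc.castSucc : Fin (n+2)) : ℕ))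
      * triK (n+2) a b (Fin.last (n+1)) j.castSucc.castSucc
      * ((triK (n+2) a b).submatrix (Fin.last (n+1)).succAbove
          (j.castSucc.castSucc).succAbove).det) = 0 := by
    refine Finset.sum_eq_zero fun j _ => ?_
    have hj := j.isLt
    have : triK (n+2) a b (Fin.last (n+1)) j.castSucc.castSucc = 0 := by
      rw [triK_apply]
      simp only [Fin.val_last, Fin.coe_castSucc]
      rw [if_neg (by omega), if_neg (by omega), if_neg (by omega)]
    rw [this]; ring
  rw [hz, zero_add]
  -- last term: j = last (n+1)
  have hlast : (triK (n+2) a b).submatrix (Fin.last (n+1)).succAbove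
      (Fin.last (n+1)).succAbove = triK (n+1) a b := by
    ext p q
    rw [Fin.succAbove_last, Matrix.submatrix_apply]
    exact triK_eq_of_val a b rfl rfl
  have hdiag : triK (n+2) a b (Fin.last (n+1)) (Fin.last (n+1)) = 1 := by
    rw [triK_apply]; simp
  -- the middle term: column index (last n).castSucc : Fin (n+2), value n
  have hentry : triK (n+2) a b (Fin.last (n+1)) (Fin.last n).castSucc =
      (if n % 2 = 0 then b (n+1) else a (n+1)) := by
    rw [triK_apply]
    simp only [Fin.val_last, Fin.coe_castSucc]
    rw [if_neg (by omega), if_neg (by omega)]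
    simp
  -- det of the minor at (last, n)
  have hminor : ((triK (n+2) a b).submatrix (Fin.last (n+1)).succAbove
      ((Fin.last n).castSucc).succAbove).det =
      (if n % 2 = 0 then a (n+1) else b (n+1)) * (triK n a b).det := by
    rw [Matrix.det_succ_column _ (Fin.last n), Fin.sum_univ_castSucc]
    have hcol : (((Fin.last n).castSucc : Fin (n+2)).succAbove (Fin.last n) : ℕ) = n + 1 := by
      rw [Fin.succAbove_of_le_castSucc _ _ (le_refl _)]
      simp
    have hz2 : (∑ p : Fin n, (-1:ℝ) ^ (((p.castSucc : Fin (n+1)) : ℕ) + ((Fin.last n) : ℕ))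
        * ((triK (n+2) a b).submatrix (Fin.last (n+1)).succAbove
            ((Fin.last n).castSucc).succAbove) p.castSucc (Fin.last n)
        * (((triK (n+2) a b).submatrix (Fin.last (n+1)).succAbove
            ((Fin.last n).castSucc).succAbove).submatrix
              p.castSucc.succAbove (Fin.last n).succAbove).det) = 0 := by
      refine Finset.sum_eq_zero fun p _ => ?_
      have hp := p.isLt
      have : ((triK (n+2) a b).submatrix (Fin.last (n+1)).succAbove
          ((Fin.last n).castSucc).succAbove) p.castSucc (Fin.last n) = 0 := by
        rw [Matrix.submatrix_apply, Fin.succAbove_last, triK_apply]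
        simp only [Fin.coe_castSucc, hcol]
        rw [if_neg (by omega), if_neg (by omega), if_neg (by omega)]
      rw [this]; ring
    rw [hz2, zero_add, Matrix.submatrix_apply, Fin.succAbove_last, Matrix.submatrix_submatrix]
    have hent2 : triK (n+2) a b ((Fin.last n).castSucc)
        (((Fin.last n).castSucc : Fin (n+2)).succAbove (Fin.last n)) =
        (if n % 2 = 0 then a (n+1) else b (n+1)) := by
      rw [triK_apply]
      simp only [Fin.coe_castSucc, Fin.val_last, hcol]
      rw [if_neg (by omega)]
      simp
    have hsub : (triK (n+2) a b).submatrix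
        (Fin.castSucc ∘ (Fin.last n).succAbove)
        ((((Fin.last n).castSucc : Fin (n+2)).succAbove) ∘ (Fin.last n).succAbove) =
        triK n a b := by
      ext p q
      rw [Matrix.submatrix_apply]
      have hq := q.isLt
      refine triK_eq_of_val a b ?_ ?_
      · simp [Fin.succAbove_last]
      · simp only [Function.comp_apply, Fin.succAbove_last]
        rw [Fin.succAbove_of_castSucc_lt]
        · simp
        · rw [Fin.lt_def]; simpa using hq
    rw [hsub, hent2]
    have : ((-1:ℝ)) ^ (((Fin.last n) : ℕ) + ((Fin.last n) : ℕ)) = 1 := by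
      simp [Fin.val_last, ← two_mul]
    rw [this]; ring
  rw [hminor, hlast, hdiag, hentry]
  have hsign1 : ((-1:ℝ)) ^ ((Fin.last (n+1) : ℕ) + ((Fin.last n).castSucc : ℕ)) = -1 := by
    simp only [Fin.val_last, Fin.coe_castSucc]
    have : n + 1 + n = 2*n + 1 := by ring
    rw [this, pow_succ, pow_mul]
    norm_num
  have hsign2 : ((-1:ℝ)) ^ ((Fin.last (n+1) : ℕ) + ((Fin.last (n+1)) : ℕ)) = 1 := by
    simp [Fin.val_last, ← two_mul]
  rw [hsign1, hsign2]
  rcases Nat.even_or_odd n with h | h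
  · rw [if_pos (Nat.even_iff.mp h), if_pos (Nat.even_iff.mp h)]; ring
  · rw [if_neg (by simpa [Nat.odd_iff] using h), if_neg (by simpa [Nat.odd_iff] using h)]; ring

end

noncomputable section

def G (ρ : ℕ → ℝ) (n : ℕ) : ℝ :=
  ∑ s ∈ (Finset.Icc 1 n).powerset.filter (fun s => ∀ i ∈ s, i + 1 ∉ s),
    ∏ i ∈ s, ρ i

lemma G_zero (ρ : ℕ → ℝ) : G ρ 0 = 1 := by
  rw [G, Finset.Icc_eq_empty (by omega), Finset.powerset_empty]
  rw [Finset.filter_singleton]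
  simp

lemma G_one (ρ : ℕ → ℝ) : G ρ 1 = 1 + ρ 1 := by
  rw [G, Finset.Icc_self, show ({1} : Finset ℕ).powerset = {∅, {1}} from rfl]
  have hfil : ({∅, {1}} : Finset (Finset ℕ)).filter (fun s => ∀ i ∈ s, i + 1 ∉ s)
      = {∅, {1}} := by
    apply Finset.filter_true_of_mem
    intro s hs
    simp only [Finset.mem_insert, Finset.mem_singleton] at hs
    rcases hs with rfl | rfl <;> simp
  rw [hfil, Finset.sum_insert (by simp only [Finset.mem_singleton]; exact fun h => Finset.singleton_ne_empty 1 h.symm), Finset.sum_singleton]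
  simp

lemma G_rec (ρ : ℕ → ℝ) (n : ℕ) : G ρ (n+2) = G ρ (n+1) + ρ (n+2) * G ρ n := by
  classical
  have hIcc : Finset.Icc 1 (n+2) = insert (n+2) (Finset.Icc 1 (n+1)) := by
    ext i; simp only [Finset.mem_Icc, Finset.mem_insert]; omega
  have hdisj : Disjoint
      ((Finset.Icc 1 (n+1)).powerset.filter (fun s => ∀ i ∈ s, i + 1 ∉ s))
      (((Finset.Icc 1 (n+1)).powerset.image (insert (n+2))).filter
        (fun s => ∀ i ∈ s, i + 1 ∉ s)) := by
    rw [Finset.disjoint_left]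
    intro s hs hs'
    simp only [Finset.mem_filter, Finset.mem_powerset, Finset.mem_image] at hs hs'
    obtain ⟨⟨t, ht, rfl⟩, -⟩ := hs'
    have := hs.1 (Finset.mem_insert_self (n+2) t)
    simp only [Finset.mem_Icc] at this; omega
  have h2 : ((Finset.Icc 1 (n+1)).powerset.image (insert (n+2))).filter
      (fun s => ∀ i ∈ s, i + 1 ∉ s) =
      ((Finset.Icc 1 n).powerset.filter (fun s => ∀ i ∈ s, i + 1 ∉ s)).image
        (insert (n+2)) := by
    ext s
    simp only [Finset.mem_filter, Finset.mem_image, Finset.mem_powerset]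
    constructor
    · rintro ⟨⟨t, ht, rfl⟩, hP⟩
      have hn1 : n + 1 ∉ t := by
        intro h
        exact hP (n+1) (Finset.mem_insert_of_mem h) (Finset.mem_insert_self _ _)
      refine ⟨t, ⟨fun i hi => ?_, fun i hi hc => ?_⟩, rfl⟩
      · have h3 := ht hi
        simp only [Finset.mem_Icc] at h3 ⊢
        have : i ≠ n + 1 := fun e => hn1 (e ▸ hi)
        omega
      · exact hP i (Finset.mem_insert_of_mem hi) (Finset.mem_insert_of_mem hc)
    · rintro ⟨t, ⟨ht, hP⟩, rfl⟩
      refine ⟨⟨t, fun i hi => ?_, rfl⟩, fun i hi hc => ?_⟩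
      · have := ht hi; simp only [Finset.mem_Icc] at this ⊢; omega
      · rcases Finset.mem_insert.mp hi with rfl | hi'
        · rcases Finset.mem_insert.mp hc with h | hc'
          · omega
          · have := ht hc'; simp only [Finset.mem_Icc] at this; omega
        · rcases Finset.mem_insert.mp hc with h | hc'
          · have := ht hi'; simp only [Finset.mem_Icc] at this; omega
          · exact hP i hi' hc'
  have hinj : ∀ t1 ∈ (Finset.Icc 1 n).powerset.filter (fun s => ∀ i ∈ s, i + 1 ∉ s),
      ∀ t2 ∈ (Finset.Icc 1 n).powerset.filter (fun s => ∀ i ∈ s, i + 1 ∉ s),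
      insert (n+2) t1 = insert (n+2) t2 → t1 = t2 := by
    intro t1 h1 t2 h2 he
    have m1 : n + 2 ∉ t1 := fun h => by
      have := Finset.mem_powerset.mp (Finset.mem_filter.mp h1).1 h
      simp only [Finset.mem_Icc] at this; omega
    have m2 : n + 2 ∉ t2 := fun h => by
      have := Finset.mem_powerset.mp (Finset.mem_filter.mp h2).1 h
      simp only [Finset.mem_Icc] at this; omega
    have := congrArg (fun s => Finset.erase s (n+2)) he
    simpa [Finset.erase_insert m1, Finset.erase_insert m2] using this
  rw [G, hIcc, Finset.powerset_insert, Finset.filter_union, Finset.sum_union hdisj, h2,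
    Finset.sum_image hinj]
  rw [G, G, Finset.mul_sum]
  congr 1
  refine Finset.sum_congr rfl fun t ht => ?_
  have hnt : n + 2 ∉ t := fun h => by
    have := Finset.mem_powerset.mp (Finset.mem_filter.mp ht).1 h
    simp only [Finset.mem_Icc] at this; omega
  rw [Finset.prod_insert hnt]

lemma det_eq_G (a b : ℕ → ℝ) : ∀ n, (triK (n+1) a b).det = G (fun i => -(a i * b i)) n ∧
    (triK (n+2) a b).det = G (fun i => -(a i * b i)) (n+1) := by
  intro n
  induction n with
  | zero =>
    have h1 : (triK 1 a b).det = 1 := by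
      rw [Matrix.det_fin_one, triK_apply]; simp
    have h0 : (triK 0 a b).det = 1 := Matrix.det_fin_zero
    refine ⟨by rw [h1, G_zero], ?_⟩
    rw [triK_det_rec, G_one, h1, h0]; ring
  | succ n ih =>
    refine ⟨ih.2, ?_⟩
    rw [triK_det_rec a b (n+1), ih.1, ih.2, G_rec]
    ring

/-- With `ρᵢ = −aᵢbᵢ`, the determinant of the tridiagonal matrix `K` equals
`∑_S ∏_{i∈S} ρᵢ`, the sum running over all subsets `S ⊆ {1,…,N−1}` containing no
two consecutive integers (the empty set contributing `1`). In particular, if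
`aᵢbᵢ ≤ 0` for all `i`, then `det K ≥ 1 > 0` and `K` is invertible. -/
theorem triK_det (N : ℕ) (hN : 2 ≤ N) (a b : ℕ → ℝ) :
    ((triK N a b).det =
      ∑ s ∈ (Finset.Icc 1 (N - 1)).powerset.filter
          (fun s => ∀ i ∈ s, i + 1 ∉ s),
        ∏ i ∈ s, -(a i * b i)) ∧
    ((∀ i, 1 ≤ i → i ≤ N - 1 → a i * b i ≤ 0) →
      1 ≤ (triK N a b).det ∧ IsUnit (triK N a b)) := by

  obtain ⟨m, rfl⟩ : ∃ m, N = m + 2 := ⟨N - 2, by omega⟩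
  have hdet : (triK (m+2) a b).det =
      ∑ s ∈ (Finset.Icc 1 (m + 2 - 1)).powerset.filter
          (fun s => ∀ i ∈ s, i + 1 ∉ s),
        ∏ i ∈ s, -(a i * b i) := by
    have h := (det_eq_G a b (m+1)).1
    rw [h, G]
    rfl
  refine ⟨hdet, fun h => ?_⟩
  have hmem : ∅ ∈ (Finset.Icc 1 (m + 2 - 1)).powerset.filter
      (fun s => ∀ i ∈ s, i + 1 ∉ s) :=
    Finset.mem_filter.mpr ⟨Finset.empty_mem_powerset _, by simp⟩
  have hnn : ∀ s ∈ (Finset.Icc 1 (m + 2 - 1)).powerset.filter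
      (fun s => ∀ i ∈ s, i + 1 ∉ s), 0 ≤ ∏ i ∈ s, -(a i * b i) := by
    intro s hs
    refine Finset.prod_nonneg fun i hi => ?_
    have hsub := Finset.mem_powerset.mp (Finset.mem_filter.mp hs).1 hi
    rw [Finset.mem_Icc] at hsub
    have := h i hsub.1 hsub.2
    linarith
  have hone : (1:ℝ) ≤ (triK (m+2) a b).det := by
    rw [hdet]
    have := Finset.single_le_sum hnn hmem
    simpa using this
  exact ⟨hone, (Matrix.isUnit_iff_isUnit_det _).mpr
    (isUnit_iff_ne_zero.mpr (by linarith))⟩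


end
end

section
/- Let α₁,…,α_N > −1, let ℓ^{(αᵢ)} be the monic Laguerre orthogonal polynomial sequences, and let Qₙ be the matrix orthogonal polynomials of the setup built from the weights wᵢ(x) = e^{−x}x^{αᵢ} on (0,∞). Set B_L = diag(α₁+1,…,α_N+1) and K = Σ_{j=1}^{⌊N/2⌋} E_{2j,2j}. Then for all n ≥ 0 and all x: x·Qₙ''(x) + Qₙ'(x)·(B_L − xI + 2xA + x(A·B_L − B_L·A)) + Qₙ(x)·(A·B_L + K) = Λₙ·Qₙ(x), where Λₙ = diag(λ₁,…,λ_N) with λᵢ = −n for i odd and λᵢ = −n + 1 for i even. That is, Qₙ is an eigenfunction of the second-order differential operator D = ∂²xI + ∂(B_L − xI + 2xA + x[A,B_L]) + A·B_L + K. -/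
/-!
Each ℓ⁽ᵅ⁾ₙ solves the Laguerre equation `x u'' + (α + 1 - x) u' = -n u`: the operator
`L u = x u'' + (α + 1 - x) u'` sends `xᵏ` to `-k xᵏ` plus lower terms and is symmetric for the
weight `e^{-x} x^α` (integration by parts; the boundary terms vanish because `α > -1`), so
`L ℓₙ + n ℓₙ` has degree `< n` and is orthogonal to every `ℓₘ` with `m < n`, hence to itself,
hence zero.

For the matrix statement, `A Pₙ₊₁ A = 0`, so `Qₙ = Rₙ (1 - x A)` with
`Rₙ = Pₙ + A Pₙ₊₁ - C Pₙ₋₁` and `C = ‖Pₙ‖² Aᵀ ‖Pₙ₋₁‖⁻²`. Since `A² = A B_L A = 0`, `A K = A` and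
`K A = 0`, conjugating by `1 - x A` turns the operator of the theorem into the decoupled operator
`F ↦ x F'' + F' (B_L - x) + F K`. By `K C = C`, `C K = 0` and the scalar Laguerre equations for
`Pₙ₊₁`, `Pₙ`, `Pₙ₋₁`, each of the three summands of `Rₙ` is an eigenfunction of the decoupled
operator with eigenvalue `Λₙ = -n + K`. Derivatives are taken of matrices of polynomials, which
are evaluated at `x` only at the end.
-/

open MeasureTheory Matrix Polynomial

noncomputable section

/-- Entrywise first derivative of `x ↦ Qₙ(x)`. -/
def matQ' {N : ℕ} (S : Set ℝ) (w : Fin N → ℝ → ℝ) (p : Fin N → ℕ → Polynomial ℝ)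
    (a : ℕ → ℝ) (n : ℕ) (x : ℝ) : Matrix (Fin N) (Fin N) ℝ :=
  Matrix.of fun i j => deriv (fun y => matQ S w p a n y i j) x

/-- Entrywise second derivative of `x ↦ Qₙ(x)`. -/
def matQ'' {N : ℕ} (S : Set ℝ) (w : Fin N → ℝ → ℝ) (p : Fin N → ℕ → Polynomial ℝ)
    (a : ℕ → ℝ) (n : ℕ) (x : ℝ) : Matrix (Fin N) (Fin N) ℝ :=
  Matrix.of fun i j => deriv (fun y => matQ' S w p a n y i j) x

open Real Set Filter Topology

section LaguerreOp

variable {R : Type*} [CommRing R]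

def laguerreOp (b : R) (u : R[X]) : R[X] :=
  X * derivative (derivative u) + (C b - X) * derivative u

theorem coeff_laguerreOp (b : R) (u : R[X]) (j : ℕ) :
    (laguerreOp b u).coeff j = (j + 1) * (j + b) * u.coeff (j + 1) - j * u.coeff j := by
  rcases j with _ | j
  · simp [laguerreOp, coeff_derivative, sub_mul]
  · simp only [laguerreOp, sub_mul, coeff_add, coeff_sub, coeff_X_mul, coeff_C_mul,
      coeff_derivative]
    push_cast
    ring

theorem degree_laguerreOp_lt {b : R} {u : R[X]} {n : ℕ} (hu : u.degree < n) :
    (laguerreOp b u).degree < n := by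
  rw [degree_lt_iff_coeff_zero] at hu ⊢
  intro j hj
  rw [coeff_laguerreOp, hu j hj, hu (j + 1) (by omega)]
  ring

end LaguerreOp

section LaguerreIntegral

variable {α : ℝ}

def laguerreIntegral (α : ℝ) (q : ℝ[X]) : ℝ :=
  ∫ x in Ioi (0 : ℝ), q.eval x * (exp (-x) * x ^ α)

theorem integrableOn_eval_mul_exp_neg_mul_rpow (hα : -1 < α) (q : ℝ[X]) :
    IntegrableOn (fun x => q.eval x * (exp (-x) * x ^ α)) (Ioi 0) := by
  induction q using Polynomial.induction_on' with
  | add p q hp hq =>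
    exact (hp.add hq).congr_fun (fun x _ => by simp [add_mul]) measurableSet_Ioi
  | monomial k c =>
    have hs : 0 < (k : ℝ) + α + 1 := by linarith [k.cast_nonneg (α := ℝ)]
    refine IntegrableOn.congr_fun ((GammaIntegral_convergent hs).const_mul c)
      (fun x (hx : 0 < x) => ?_) measurableSet_Ioi
    rw [show (k : ℝ) + α + 1 - 1 = k + α by ring, rpow_add hx, rpow_natCast, eval_monomial]
    ring

theorem laguerreIntegral_add (hα : -1 < α) (p q : ℝ[X]) :
    laguerreIntegral α (p + q) = laguerreIntegral α p + laguerreIntegral α q := by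
  simp only [laguerreIntegral, eval_add, add_mul]
  exact integral_add (integrableOn_eval_mul_exp_neg_mul_rpow hα p)
    (integrableOn_eval_mul_exp_neg_mul_rpow hα q)

theorem laguerreIntegral_C_mul (c : ℝ) (q : ℝ[X]) :
    laguerreIntegral α (C c * q) = c * laguerreIntegral α q := by
  simp only [laguerreIntegral, eval_mul, eval_C, mul_assoc, integral_const_mul]

theorem tendsto_exp_neg_mul_rpow_mul_eval_atTop (s : ℝ) (g : ℝ[X]) :
    Tendsto (fun x => exp (-x) * x ^ s * g.eval x) atTop (𝓝 0) := by
  induction g using Polynomial.induction_on' with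
  | add p q hp hq => simpa [mul_add] using hp.add hq
  | monomial k c =>
    have h := (tendsto_rpow_mul_exp_neg_mul_atTop_nhds_zero (s + k) 1 one_pos).const_mul c
    rw [mul_zero] at h
    refine h.congr' ?_
    filter_upwards [eventually_gt_atTop 0] with x hx
    rw [rpow_add hx, rpow_natCast, eval_monomial]
    ring_nf

-- The integrand is the derivative of `e^{-x} x^{α+1} g(x)`, which vanishes at `0` and at `∞`.
theorem laguerreIntegral_total_derivative (hα : -1 < α) (g : ℝ[X]) :
    laguerreIntegral α ((C (α + 1) - X) * g + X * derivative g) = 0 := by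
  have hα₁ : 0 < α + 1 := by linarith
  have hderiv : ∀ x ∈ Ioi (0 : ℝ), HasDerivAt (fun x => exp (-x) * x ^ (α + 1) * g.eval x)
      (((C (α + 1) - X) * g + X * derivative g).eval x * (exp (-x) * x ^ α)) x := by
    intro x (hx : 0 < x)
    have hexp : HasDerivAt (fun x => exp (-x)) (-exp (-x)) x := by
      simpa using (hasDerivAt_neg x).exp
    refine ((hexp.mul (hasDerivAt_rpow_const (p := α + 1) (Or.inl hx.ne'))).mul
      (g.hasDerivAt x)).congr_deriv ?_
    simp only [Pi.mul_apply, rpow_add hx, rpow_one, add_sub_cancel_right, eval_add, eval_mul,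
      eval_sub, eval_C, eval_X]
    ring
  have hcont : ContinuousWithinAt (fun x => exp (-x) * x ^ (α + 1) * g.eval x) (Ici 0) 0 :=
    ((continuous_exp.comp continuous_neg).continuousAt.mul
      (continuousAt_rpow_const _ _ (Or.inr hα₁.le)) |>.mul
      g.continuous.continuousAt).continuousWithinAt
  have := integral_Ioi_of_hasDerivAt_of_tendsto hcont hderiv
    (integrableOn_eval_mul_exp_neg_mul_rpow hα _) (tendsto_exp_neg_mul_rpow_mul_eval_atTop _ g)
  rw [laguerreIntegral, this]
  simp [zero_rpow hα₁.ne']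

theorem laguerreIntegral_laguerreOp_mul (hα : -1 < α) (u v : ℝ[X]) :
    laguerreIntegral α (laguerreOp (α + 1) u * v)
      = -laguerreIntegral α (X * derivative u * derivative v) := by
  have h := laguerreIntegral_total_derivative hα (derivative u * v)
  rw [show (C (α + 1) - X) * (derivative u * v) + X * derivative (derivative u * v)
      = laguerreOp (α + 1) u * v + X * derivative u * derivative v by
    rw [laguerreOp, derivative_mul]; ring, laguerreIntegral_add hα] at h
  linarith

theorem laguerreIntegral_laguerreOp_mul_comm (hα : -1 < α) (u v : ℝ[X]) :
    laguerreIntegral α (laguerreOp (α + 1) u * v)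
      = laguerreIntegral α (u * laguerreOp (α + 1) v) := by
  rw [laguerreIntegral_laguerreOp_mul hα, mul_comm u, laguerreIntegral_laguerreOp_mul hα,
    mul_right_comm]

theorem eq_zero_of_laguerreIntegral_mul_self (hα : -1 < α) {q : ℝ[X]}
    (h : laguerreIntegral α (q * q) = 0) : q = 0 := by
  by_contra hq
  have hpos : ∀ x ∈ Ioi (0 : ℝ), 0 ≤ (q * q).eval x * (exp (-x) * x ^ α) := by
    intro x (hx : 0 < x)
    rw [eval_mul]
    exact mul_nonneg (mul_self_nonneg _) (by positivity)
  have hsupp : Ioi 0 \ {x | q.IsRoot x} ⊆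
      Function.support (fun x => (q * q).eval x * (exp (-x) * x ^ α)) ∩ Ioi 0 := by
    rintro x ⟨hx : 0 < x, hroot : q.eval x ≠ 0⟩
    refine ⟨?_, hx⟩
    rw [Function.mem_support, eval_mul]
    exact mul_ne_zero (mul_ne_zero hroot hroot) (by positivity)
  have hvol := measure_mono (μ := volume) hsupp
  rw [measure_sdiff_null ((finite_setOfPred_isRoot hq).measure_zero _), volume_Ioi] at hvol
  have := (setIntegral_pos_iff_support_of_nonneg_ae
    ((ae_restrict_iff' measurableSet_Ioi).2 (ae_of_all _ hpos))
    (integrableOn_eval_mul_exp_neg_mul_rpow hα _)).2 (top_le_iff.1 hvol ▸ WithTop.top_pos)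
  exact this.ne' h

theorem laguerreIntegral_mul_eq_zero_of_degree_lt (hα : -1 < α) {p : ℕ → ℝ[X]}
    (hm : ∀ n, (p n).Monic) (hd : ∀ n, (p n).natDegree = n) {r : ℝ[X]} {n : ℕ}
    (hr : ∀ m < n, laguerreIntegral α (r * p m) = 0) {q : ℝ[X]} (hq : q.degree < n) :
    laguerreIntegral α (r * q) = 0 := by
  induction n generalizing q with
  | zero =>
    rw [degree_lt_iff_coeff_zero] at hq
    obtain rfl : q = 0 := ext fun j => by rw [coeff_zero]; exact hq j j.zero_le
    simp [laguerreIntegral]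
  | succ n ih =>
    have hpn : ∀ j, n ≤ j → (p n).coeff j = if j = n then 1 else 0 := fun j hj => by
      split_ifs with h
      · simpa [h, hd n] using (hm n).coeff_natDegree
      · exact coeff_eq_zero_of_natDegree_lt (by rw [hd n]; omega)
    have hlow : (q - C (q.coeff n) * p n).degree < n := by
      rw [degree_lt_iff_coeff_zero] at hq ⊢
      intro j hj
      rw [coeff_sub, coeff_C_mul, hpn j hj]
      split_ifs with h
      · rw [h, mul_one, sub_self]
      · rw [hq j (by omega), mul_zero, sub_zero]
    rw [show r * q = r * (q - C (q.coeff n) * p n) + C (q.coeff n) * (r * p n) by ring,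
      laguerreIntegral_add hα, laguerreIntegral_C_mul, ih (fun m hm => hr m (by omega)) hlow,
      hr n n.lt_succ_self, mul_zero, add_zero]

theorem laguerreOp_eq_of_orthogonal (hα : -1 < α) {p : ℕ → ℝ[X]} (hm : ∀ n, (p n).Monic)
    (hd : ∀ n, (p n).natDegree = n)
    (ho : ∀ n m, n ≠ m → laguerreIntegral α (p n * p m) = 0) (n : ℕ) :
    laguerreOp (α + 1) (p n) = -(n : ℝ[X]) * p n := by
  have hdeg : ∀ m, (p m).degree < (m + 1 : ℕ) := fun m => by
    rw [degree_eq_natDegree (hm m).ne_zero, hd m]; exact_mod_cast m.lt_succ_self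
  have horth : ∀ {r : ℝ[X]}, r.degree < n → laguerreIntegral α (p n * r) = 0 :=
    laguerreIntegral_mul_eq_zero_of_degree_lt hα hm hd fun m hmn => ho n m hmn.ne'
  set q := laguerreOp (α + 1) (p n) + (n : ℝ[X]) * p n
  have hq : q.degree < n := by
    rw [degree_lt_iff_coeff_zero]
    intro j hj
    have hcoeff : (p n).coeff (j + 1) = 0 := coeff_eq_zero_of_natDegree_lt (by rw [hd n]; omega)
    rw [coeff_add, coeff_laguerreOp, coeff_natCast_mul, hcoeff]
    rcases hj.eq_or_lt with rfl | hlt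
    · ring
    · rw [coeff_eq_zero_of_natDegree_lt (by rw [hd n]; omega)]; ring
  have hq_orth : ∀ m < n, laguerreIntegral α (q * p m) = 0 := fun m hmn => by
    rw [add_mul, laguerreIntegral_add hα, laguerreIntegral_laguerreOp_mul_comm hα,
      horth (degree_laguerreOp_lt ((hdeg m).trans_le (by exact_mod_cast hmn))), mul_assoc,
      ← C_eq_natCast, laguerreIntegral_C_mul, ho n m hmn.ne', mul_zero, add_zero]
  have := eq_zero_of_laguerreIntegral_mul_self hα
    (laguerreIntegral_mul_eq_zero_of_degree_lt hα hm hd hq_orth hq)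
  linear_combination this

end LaguerreIntegral

theorem mul_mul_eq_zero_of_commute {M : Type*} [MonoidWithZero M] {A K B : M}
    (hAK : A * K = A) (hKA : K * A = 0) (hKB : Commute K B) : A * B * A = 0 :=
  calc A * B * A = A * K * B * A := by rw [hAK]
    _ = A * B * (K * A) := by rw [mul_assoc A K, hKB.eq, ← mul_assoc, mul_assoc]
    _ = 0 := by rw [hKA, mul_zero]

section MatrixDerivative

variable {R : Type*} [CommRing R] {l m n : Type*}

namespace Matrix

theorem map_derivative_add (F G : Matrix l m R[X]) :
    (F + G).map derivative = F.map derivative + G.map derivative :=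
  Matrix.map_add _ (fun _ _ => derivative_add) F G

theorem map_derivative_sub (F G : Matrix l m R[X]) :
    (F - G).map derivative = F.map derivative - G.map derivative :=
  Matrix.map_sub _ (fun _ _ => derivative_sub) F G

theorem map_derivative_smul (p : R[X]) (F : Matrix l m R[X]) :
    (p • F).map derivative = derivative p • F + p • F.map derivative := by
  ext i j; simp [derivative_mul]

theorem map_derivative_mul [Fintype m] (F : Matrix l m R[X]) (G : Matrix m n R[X]) :
    (F * G).map derivative = F.map derivative * G + F * G.map derivative := by
  ext i j; simp [mul_apply, derivative_mul, Finset.sum_add_distrib]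

theorem map_derivative_neg (F : Matrix l m R[X]) : (-F).map derivative = -F.map derivative :=
  Matrix.map_neg _ (fun _ => derivative_neg _) F

theorem map_C_map_eval (A : Matrix l m R) (x : R) : (A.map C).map (eval x) = A := by
  ext i j; simp

theorem map_C_mul_map_eval [Fintype m] (A : Matrix l m R) (F : Matrix m n R[X]) (x : R) :
    (A.map C * F).map (eval x) = A * F.map (eval x) := by
  rw [← coe_evalRingHom, Matrix.map_mul, coe_evalRingHom, map_C_map_eval]

theorem map_C_map_derivative (A : Matrix l m R) : (A.map C).map derivative = 0 := by
  ext i j; simp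

theorem map_derivative_one [DecidableEq n] : (1 : Matrix n n R[X]).map derivative = 0 := by
  simpa using map_C_map_derivative (1 : Matrix n n R)

end Matrix

end MatrixDerivative

section MatrixLaguerreOp

variable {R : Type*} [CommRing R] {n : Type*} [Fintype n] [DecidableEq n]

def diagLaguerreOp (B K F : Matrix n n R[X]) : Matrix n n R[X] :=
  (X : R[X]) • (F.map derivative).map derivative + F.map derivative * (B - (X : R[X]) • 1)
    + F * K

def coupledLaguerreOp (A B K F : Matrix n n R[X]) : Matrix n n R[X] :=
  (X : R[X]) • (F.map derivative).map derivative
    + F.map derivative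
      * (B - (X : R[X]) • 1 + (2 * X : R[X]) • A + (X : R[X]) • (A * B - B * A))
    + F * (A * B + K)

theorem map_eval_coupledLaguerreOp (x : R) (A B K F : Matrix n n R[X]) :
    (coupledLaguerreOp A B K F).map (eval x)
      = x • ((F.map derivative).map derivative).map (eval x)
        + (F.map derivative).map (eval x) * (B.map (eval x) - x • 1 + (2 * x) • A.map (eval x)
          + x • (A.map (eval x) * B.map (eval x) - B.map (eval x) * A.map (eval x)))
        + F.map (eval x) * (A.map (eval x) * B.map (eval x) + K.map (eval x)) := by
  change (coupledLaguerreOp A B K F).map (evalRingHom x) = _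
  simp only [coupledLaguerreOp, Matrix.map_add, Matrix.map_sub, Matrix.map_mul, Matrix.map_smul',
    Matrix.map_one, map_add, map_sub, map_mul, map_zero, map_one, implies_true]
  simp only [coe_evalRingHom, eval_X, eval_ofNat]

theorem coupledLaguerreOp_mul_one_sub_X_smul {A B K : Matrix n n R[X]}
    (hA : A.map derivative = 0) (hAK : A * K = A) (hKA : K * A = 0) (hKB : Commute K B)
    (F : Matrix n n R[X]) :
    coupledLaguerreOp A B K (F * (1 - (X : R[X]) • A))
      = diagLaguerreOp B K F * (1 - (X : R[X]) • A) := by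
  have hAA : A * A = 0 := by
    simpa using mul_mul_eq_zero_of_commute hAK hKA (Commute.one_right K)
  have hABA : A * (B * A) = 0 := by
    rw [← mul_assoc]; exact mul_mul_eq_zero_of_commute hAK hKA hKB
  have hzero : ∀ {P Q : Matrix n n R[X]}, P * Q = 0 → ∀ M, P * (Q * M) = 0 :=
    fun h M => by rw [← mul_assoc, h, zero_mul]
  have hU : (1 - (X : R[X]) • A).map derivative = -A := by
    rw [map_derivative_sub, map_derivative_one, map_derivative_smul, hA, derivative_X]
    simp
  have hD : (F * (1 - (X : R[X]) • A)).map derivative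
      = F.map derivative * (1 - (X : R[X]) • A) - F * A := by
    rw [map_derivative_mul, hU, mul_neg, ← sub_eq_add_neg]
  have hDD : ((F * (1 - (X : R[X]) • A)).map derivative).map derivative
      = (F.map derivative).map derivative * (1 - (X : R[X]) • A)
        - (2 : R[X]) • (F.map derivative * A) := by
    rw [hD, map_derivative_sub, map_derivative_mul, map_derivative_mul, hU, hA, mul_zero,
      add_zero, mul_neg, two_smul]
    abel
  rw [coupledLaguerreOp, diagLaguerreOp, hDD, hD]
  simp only [mul_add, add_mul, mul_sub, sub_mul, smul_mul_assoc, mul_smul_comm, mul_one,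
    smul_add, smul_sub, mul_assoc, hAA, hABA, hAK, hKA, hzero, smul_zero, mul_zero]
  module

theorem diagLaguerreOp_add (B K F G : Matrix n n R[X]) :
    diagLaguerreOp B K (F + G) = diagLaguerreOp B K F + diagLaguerreOp B K G := by
  simp only [diagLaguerreOp, map_derivative_add, smul_add, add_mul]
  abel

theorem diagLaguerreOp_sub (B K F G : Matrix n n R[X]) :
    diagLaguerreOp B K (F - G) = diagLaguerreOp B K F - diagLaguerreOp B K G := by
  simp only [diagLaguerreOp, map_derivative_sub, smul_sub, sub_mul]
  abel

theorem diagLaguerreOp_mul_diagonal {M : Matrix n n R[X]} (hM : M.map derivative = 0)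
    {b : n → R} (K : Matrix n n R[X]) {q : n → R[X]} {μ : R[X]}
    (hq : ∀ i, laguerreOp (b i) (q i) = -μ * q i) :
    diagLaguerreOp (diagonal fun i => C (b i)) K (M * diagonal q)
      = -μ • (M * diagonal q) + M * diagonal q * K := by
  have hdiag : (X : R[X]) • ((diagonal q).map derivative).map derivative
      + (diagonal q).map derivative * (diagonal (fun i => C (b i)) - (X : R[X]) • 1)
      = -μ • diagonal q := by
    ext i j : 1
    rcases eq_or_ne i j with rfl | hij
    · simpa [diagonal_map, sub_mul, laguerreOp, mul_comm] using hq i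
    · simp [diagonal_map, hij]
  simp only [diagLaguerreOp, map_derivative_mul, hM, zero_mul, zero_add]
  rw [← mul_smul_comm, mul_assoc M, ← mul_add, hdiag, mul_smul_comm, mul_assoc]

theorem diagLaguerreOp_eigen {A G : Matrix n n R[X]} {b : n → R} {k p pSucc pPred : n → R[X]}
    {ν : R[X]} (hA : A.map derivative = 0) (hG : G.map derivative = 0)
    (hKA : diagonal k * A = 0) (hAK : A * diagonal k = A)
    (hKG : diagonal k * G = G) (hGK : G * diagonal k = 0)
    (hp : ∀ i, laguerreOp (b i) (p i) = -ν * p i)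
    (hpSucc : ∀ i, laguerreOp (b i) (pSucc i) = -(ν + 1) * pSucc i)
    (hpPred : G = 0 ∨ ∀ i, laguerreOp (b i) (pPred i) = -(ν - 1) * pPred i) :
    diagLaguerreOp (diagonal fun i => C (b i)) (diagonal k)
        (diagonal p + A * diagonal pSucc - G * diagonal pPred)
      = (-ν • 1 + diagonal k) * (diagonal p + A * diagonal pSucc - G * diagonal pPred) := by
  have hK : ∀ q : n → R[X], diagonal q * diagonal k = diagonal k * diagonal q :=
    fun q => (commute_diagonal q k).eq
  have hP : diagLaguerreOp (diagonal fun i => C (b i)) (diagonal k) (diagonal p)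
      = (-ν • 1 + diagonal k) * diagonal p := by
    simpa [hK, add_mul] using diagLaguerreOp_mul_diagonal map_derivative_one (diagonal k) hp
  have hSucc : diagLaguerreOp (diagonal fun i => C (b i)) (diagonal k) (A * diagonal pSucc)
      = (-ν • 1 + diagonal k) * (A * diagonal pSucc) := by
    rw [diagLaguerreOp_mul_diagonal hA _ hpSucc, mul_assoc, hK, ← mul_assoc, hAK, add_mul,
      ← mul_assoc (diagonal k), hKA, zero_mul, smul_mul_assoc, one_mul]
    module
  have hPred : diagLaguerreOp (diagonal fun i => C (b i)) (diagonal k) (G * diagonal pPred)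
      = (-ν • 1 + diagonal k) * (G * diagonal pPred) := by
    rcases hpPred with rfl | hpPred
    · simp [diagLaguerreOp]
    rw [diagLaguerreOp_mul_diagonal hG _ hpPred, mul_assoc, hK, ← mul_assoc, hGK, add_mul,
      ← mul_assoc (diagonal k), hKG, zero_mul, smul_mul_assoc, one_mul]
    module
  rw [diagLaguerreOp_sub, diagLaguerreOp_add, hP, hSucc, hPred, mul_sub, mul_add]

end MatrixLaguerreOp

section LaguerreMatrix

variable {N : ℕ} (S : Set ℝ) (w : Fin N → ℝ → ℝ) (p : Fin N → ℕ → ℝ[X]) (a : ℕ → ℝ)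
  (n : ℕ)

-- 0-based indices: `oddIndicator` marks the paper's even indices, `K = diagonal oddIndicator`.
def oddIndicator (N : ℕ) : Fin N → ℝ := fun i => if i.val % 2 = 1 then 1 else 0

theorem diagonal_oddIndicator_mul_nilA :
    diagonal (oddIndicator N) * nilA N a = 0 := by
  ext i k
  rw [diagonal_mul, nilA, of_apply, oddIndicator]
  split_ifs <;> simp <;> omega

theorem nilA_mul_diagonal_oddIndicator :
    nilA N a * diagonal (oddIndicator N) = nilA N a := by
  ext i k
  rw [mul_diagonal, nilA, of_apply, oddIndicator]
  split_ifs <;> simp <;> omega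

def prevCoeff : Matrix (Fin N) (Fin N) ℝ :=
  if n = 0 then 0 else nsq S w p n * (nilA N a)ᵀ * (nsq S w p (n - 1))⁻¹

theorem prevCoeff_eq_diagonal_mul_transpose_mul_diagonal :
    ∃ d e : Fin N → ℝ, prevCoeff S w p a n = diagonal d * (nilA N a)ᵀ * diagonal e := by
  unfold prevCoeff
  split_ifs
  · exact ⟨0, 0, by simp⟩
  · exact ⟨_, _, by rw [nsq, nsq, inv_diagonal]⟩

theorem diagonal_oddIndicator_mul_prevCoeff :
    diagonal (oddIndicator N) * prevCoeff S w p a n = prevCoeff S w p a n := by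
  obtain ⟨d, e, h⟩ := prevCoeff_eq_diagonal_mul_transpose_mul_diagonal S w p a n
  have hK : diagonal (oddIndicator N) * (nilA N a)ᵀ = (nilA N a)ᵀ := by
    rw [← diagonal_transpose, ← transpose_mul, nilA_mul_diagonal_oddIndicator]
  rw [h, ← mul_assoc, ← mul_assoc, (commute_diagonal _ d).eq, mul_assoc _ _ (nilA N a)ᵀ, hK]

theorem prevCoeff_mul_diagonal_oddIndicator :
    prevCoeff S w p a n * diagonal (oddIndicator N) = 0 := by
  obtain ⟨d, e, h⟩ := prevCoeff_eq_diagonal_mul_transpose_mul_diagonal S w p a n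
  have hK : (nilA N a)ᵀ * diagonal (oddIndicator N) = 0 := by
    rw [← diagonal_transpose, ← transpose_mul, diagonal_oddIndicator_mul_nilA, transpose_zero]
  rw [h, mul_assoc, (commute_diagonal e _).eq, ← mul_assoc, mul_assoc _ (nilA N a)ᵀ, hK,
    mul_zero, zero_mul]

def matQPoly : Matrix (Fin N) (Fin N) ℝ[X] :=
  (diagonal (p · n) + (nilA N a).map C * diagonal (p · (n + 1))
      - (prevCoeff S w p a n).map C * diagonal (p · (n - 1)))
    * (1 - (X : ℝ[X]) • (nilA N a).map C)

theorem matQ_eq_map_eval (y : ℝ) : matQ S w p a n y = (matQPoly S w p a n).map (eval y) := by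
  have hAPA : nilA N a * diagP p (n + 1) y * nilA N a = 0 :=
    mul_mul_eq_zero_of_commute (nilA_mul_diagonal_oddIndicator a)
      (diagonal_oddIndicator_mul_nilA a) (commute_diagonal _ _)
  have hdiag : ∀ k, (diagonal (p · k)).map (eval y) = diagP p k y :=
    fun k => diagonal_map eval_zero
  change _ = (matQPoly S w p a n).map (evalRingHom y)
  simp only [matQPoly, ← RingHom.mapMatrix_apply, map_mul, map_sub, map_add, map_one]
  simp only [RingHom.mapMatrix_apply, coe_evalRingHom, hdiag, map_C_map_eval,
    Matrix.map_smul' _ _ _ (fun _ _ => eval_mul), eval_X]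
  simp only [matQ, prevCoeff, mul_sub, mul_one, mul_smul_comm, add_mul, sub_mul, hAPA]
  module

theorem matQ'_eq_map_eval (y : ℝ) :
    matQ' S w p a n y = ((matQPoly S w p a n).map derivative).map (eval y) := by
  ext i j
  simp only [matQ', of_apply, matQ_eq_map_eval, map_apply]
  exact Polynomial.deriv _

theorem matQ''_eq_map_eval (y : ℝ) :
    matQ'' S w p a n y
      = (((matQPoly S w p a n).map derivative).map derivative).map (eval y) := by
  ext i j
  simp only [matQ'', of_apply, matQ'_eq_map_eval, map_apply]
  exact Polynomial.deriv _

theorem coupledLaguerreOp_matQPoly (α : Fin N → ℝ)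
    (hp : ∀ i m, laguerreOp (α i + 1) (p i m) = -(m : ℝ[X]) * p i m) :
    coupledLaguerreOp ((nilA N a).map C) ((diagonal fun i => α i + 1).map C)
        ((diagonal (oddIndicator N)).map C) (matQPoly S w p a n)
      = (diagonal fun i : Fin N => if i.val % 2 = 1 then -(n : ℝ) + 1 else -(n : ℝ)).map C
        * matQPoly S w p a n := by
  have lift : ∀ {M M' M'' : Matrix (Fin N) (Fin N) ℝ}, M * M' = M'' →
      M.map C * M'.map C = M''.map C := fun h => by rw [← Matrix.map_mul, h]
  have hKA := lift (diagonal_oddIndicator_mul_nilA a)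
  have hAK := lift (nilA_mul_diagonal_oddIndicator a)
  have hKG := lift (diagonal_oddIndicator_mul_prevCoeff S w p a n)
  have hGK := lift (prevCoeff_mul_diagonal_oddIndicator S w p a n)
  simp only [diagonal_map (map_zero C), Matrix.map_zero _ (map_zero C)] at hKA hAK hKG hGK ⊢
  have hΛ : (diagonal fun i : Fin N => C (if i.val % 2 = 1 then -(n : ℝ) + 1 else -(n : ℝ)))
      = -(n : ℝ[X]) • 1 + diagonal fun i => C (oddIndicator N i) := by
    ext i j : 1
    rcases eq_or_ne i j with rfl | hij
    · by_cases h : i.val % 2 = 1 <;> simp [oddIndicator, h]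
    · simp [hij]
  have hSucc : ∀ i, laguerreOp (α i + 1) (p i (n + 1)) = -((n : ℝ[X]) + 1) * p i (n + 1) :=
    fun i => by rw [hp]; push_cast; ring
  have hPred : (prevCoeff S w p a n).map C = 0 ∨
      ∀ i, laguerreOp (α i + 1) (p i (n - 1)) = -((n : ℝ[X]) - 1) * p i (n - 1) := by
    -- for `n = 0`, `p i (n - 1) = p i 0` has the wrong eigenvalue, but `prevCoeff` vanishes
    rcases n with _ | m
    · left; simp [prevCoeff]
    · right; intro i; rw [hp]; push_cast; ring
  rw [matQPoly, coupledLaguerreOp_mul_one_sub_X_smul (map_C_map_derivative _) hAK hKA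
    (commute_diagonal _ _), diagLaguerreOp_eigen (map_C_map_derivative _) (map_C_map_derivative _)
    hKA hAK hKG hGK (hp · n) hSucc hPred, hΛ, mul_assoc]

end LaguerreMatrix

theorem laguerre_type_eigenfunction_general
    (N : ℕ) (α : Fin N → ℝ) (hα : ∀ i, -1 < α i)
    (a : ℕ → ℝ)
    (ℓ : Fin N → ℕ → Polynomial ℝ)
    (hmonic : ∀ i n, (ℓ i n).Monic)
    (hdeg : ∀ i n, (ℓ i n).natDegree = n)
    (horth : ∀ i, ∀ n m : ℕ, n ≠ m →
      ∫ x in Set.Ioi (0 : ℝ),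
        (ℓ i n).eval x * (ℓ i m).eval x * (Real.exp (-x) * x ^ α i) = 0) :
    ∀ (n : ℕ) (x : ℝ),
      x • matQ'' (Set.Ioi 0) (fun i y => Real.exp (-y) * y ^ α i) ℓ a n x
      + matQ' (Set.Ioi 0) (fun i y => Real.exp (-y) * y ^ α i) ℓ a n x *
          (Matrix.diagonal (fun i => α i + 1)
            - x • (1 : Matrix (Fin N) (Fin N) ℝ)
            + (2 * x) • nilA N a
            + x • (nilA N a * Matrix.diagonal (fun i => α i + 1)
                - Matrix.diagonal (fun i => α i + 1) * nilA N a))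
      + matQ (Set.Ioi 0) (fun i y => Real.exp (-y) * y ^ α i) ℓ a n x *
          (nilA N a * Matrix.diagonal (fun i => α i + 1)
            + Matrix.diagonal (fun i : Fin N => if i.val % 2 = 1 then (1 : ℝ) else 0))
      = Matrix.diagonal (fun i : Fin N =>
          if i.val % 2 = 1 then -(n : ℝ) + 1 else -(n : ℝ)) *
          matQ (Set.Ioi 0) (fun i y => Real.exp (-y) * y ^ α i) ℓ a n x := by
  intro n x
  have hℓ : ∀ i m, laguerreOp (α i + 1) (ℓ i m) = -(m : ℝ[X]) * ℓ i m := fun i =>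
    laguerreOp_eq_of_orthogonal (hα i) (hmonic i) (hdeg i) fun n m hnm => by
      simpa [laguerreIntegral, eval_mul] using horth i n m hnm
  have h := congrArg (Matrix.map · (eval x))
    (coupledLaguerreOp_matQPoly (Set.Ioi 0) (fun i y => Real.exp (-y) * y ^ α i) ℓ a n α hℓ)
  rw [map_eval_coupledLaguerreOp, map_C_mul_map_eval] at h
  simp only [map_C_map_eval] at h
  rw [matQ_eq_map_eval, matQ'_eq_map_eval, matQ''_eq_map_eval]
  exact h

/-- Laguerre-type matrix orthogonal polynomials are eigenfunctions of the
second-order differential operator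
`D = ∂² x I + ∂ (B_L − xI + 2xA + x[A,B_L]) + A B_L + K`, with eigenvalue
`Λₙ = diag(λ₁,…,λ_N)`, `λᵢ = −n` for `i` odd and `λᵢ = −n+1` for `i` even
(1-based `i`). -/
theorem laguerre_type_eigenfunction
    (N : ℕ) (α : Fin N → ℝ) (hα : ∀ i, -1 < α i)
    (a : ℕ → ℝ) (ha : ∀ k, 1 ≤ k → k ≤ N - 1 → a k ≠ 0)
    (ℓ : Fin N → ℕ → Polynomial ℝ)
    (hmonic : ∀ i n, (ℓ i n).Monic)
    (hdeg : ∀ i n, (ℓ i n).natDegree = n)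
    (horth : ∀ i, ∀ n m : ℕ, n ≠ m →
      ∫ x in Set.Ioi (0 : ℝ),
        (ℓ i n).eval x * (ℓ i m).eval x * (Real.exp (-x) * x ^ α i) = 0) :
    ∀ (n : ℕ) (x : ℝ),
      x • matQ'' (Set.Ioi 0) (fun i y => Real.exp (-y) * y ^ α i) ℓ a n x
      + matQ' (Set.Ioi 0) (fun i y => Real.exp (-y) * y ^ α i) ℓ a n x *
          (Matrix.diagonal (fun i => α i + 1)
            - x • (1 : Matrix (Fin N) (Fin N) ℝ)
            + (2 * x) • nilA N a
            + x • (nilA N a * Matrix.diagonal (fun i => α i + 1)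
                - Matrix.diagonal (fun i => α i + 1) * nilA N a))
      + matQ (Set.Ioi 0) (fun i y => Real.exp (-y) * y ^ α i) ℓ a n x *
          (nilA N a * Matrix.diagonal (fun i => α i + 1)
            + Matrix.diagonal (fun i : Fin N => if i.val % 2 = 1 then (1 : ℝ) else 0))
      = Matrix.diagonal (fun i : Fin N =>
          if i.val % 2 = 1 then -(n : ℝ) + 1 else -(n : ℝ)) *
          matQ (Set.Ioi 0) (fun i y => Real.exp (-y) * y ^ α i) ℓ a n x :=
  laguerre_type_eigenfunction_general N α hα a ℓ hmonic hdeg horth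

end
end
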